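/- arXiv:2206.12863 — 5 statements merged into one kernel-verified Lean document; each statement's English description precedes it below -/
import Mathlib

section
/- Let 0 < λ2 < λ1, let (u₂, v₂) be a solution of (S_{λ2}) with u₀ + u₂ ≤ 0 and v₀ + v₂ ≤ 0 on V, and let (u₁, v₁) be a maximal solution of (S_{λ1}). Then u₁(x) > u₂(x) and v₁(x) > v₂(x) for all x ∈ V. In particular, maximal solutions are strictly increasing in λ. -/
open Real Finset

/-- The μ-Laplacian on a finite weighted graph. -/
noncomputable def graphLap {V : Type*} [Fintype V] (ω : V → V → ℝ) (μ : V → ℝ)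
    (f : V → ℝ) (x : V) : ℝ :=
  (1 / μ x) * ∑ y, ω x y * (f y - f x)

/-- The integral of `f` over `V` with respect to the measure `μ`. -/
noncomputable def graphInt {V : Type*} [Fintype V] (μ : V → ℝ) (f : V → ℝ) : ℝ :=
  ∑ x, μ x * f x

/-- The total volume `|V|` of the graph. -/
noncomputable def graphVol {V : Type*} [Fintype V] (μ : V → ℝ) : ℝ :=
  ∑ x, μ x

/-- The Dirac delta mass at vertex `p`. -/
noncomputable def diracDelta {V : Type*} [DecidableEq V] (μ : V → ℝ) (p x : V) : ℝ :=
  if x = p then 1 / μ p else 0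

/-- `primFun F t = ∫_{√t}^{1} 2 s F(s²) ds`; this gives `g` from `G` and `h` from `H`. -/
noncomputable def primFun (F : ℝ → ℝ) (t : ℝ) : ℝ :=
  ∫ s in Real.sqrt t..(1 : ℝ), 2 * s * F (s ^ 2)

/-- The pointwise squared gradient `|∇ f|²(x)`. -/
noncomputable def gradSq {V : Type*} [Fintype V] (ω : V → V → ℝ) (μ : V → ℝ)
    (f : V → ℝ) (x : V) : ℝ :=
  (1 / (2 * μ x)) * ∑ y, ω x y * (f y - f x) ^ 2

/-- The gradient norm `‖∇ f‖₂ = (∫_V |∇ f|² dμ)^{1/2}`. -/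
noncomputable def gradNorm {V : Type*} [Fintype V] (ω : V → V → ℝ) (μ : V → ℝ)
    (f : V → ℝ) : ℝ :=
  Real.sqrt (graphInt μ (gradSq ω μ f))

/-- The mean value `f̄ = (1/|V|) ∫_V f dμ`. -/
noncomputable def graphAvg {V : Type*} [Fintype V] (μ : V → ℝ) (f : V → ℝ) : ℝ :=
  (1 / graphVol μ) * graphInt μ f

/-- The `W^{1,2}(V)` norm, `(∫_V (|∇ f|² + f²) dμ)^{1/2}`. -/
noncomputable def sobolevNorm {V : Type*} [Fintype V] (ω : V → V → ℝ) (μ : V → ℝ)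
    (f : V → ℝ) : ℝ :=
  Real.sqrt (graphInt μ (fun x => gradSq ω μ f x + f x ^ 2))

/-- `(u, v)` is a solution of the system `(S_λ)`. -/
def isSolution {V : Type*} [Fintype V] (ω : V → V → ℝ) (μ : V → ℝ)
    (G H : ℝ → ℝ) (N1 N2 : ℕ) (u₀ v₀ : V → ℝ) (lam : ℝ) (u v : V → ℝ) : Prop :=
  ∀ x, graphLap ω μ u x =
      -lam * Real.exp (v₀ x + v x) * H (Real.exp (v₀ x + v x)) *
        primFun G (Real.exp (u₀ x + u x)) + 4 * Real.pi * N1 / graphVol μ ∧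
    graphLap ω μ v x =
      -lam * Real.exp (u₀ x + u x) * G (Real.exp (u₀ x + u x)) *
        primFun H (Real.exp (v₀ x + v x)) + 4 * Real.pi * N2 / graphVol μ

/-- `(u, v)` is a lower solution of the system `(S_λ)`. -/
def isLowerSolution {V : Type*} [Fintype V] (ω : V → V → ℝ) (μ : V → ℝ)
    (G H : ℝ → ℝ) (N1 N2 : ℕ) (u₀ v₀ : V → ℝ) (lam : ℝ) (u v : V → ℝ) : Prop :=
  ∀ x, graphLap ω μ u x ≥
      -lam * Real.exp (v₀ x + v x) * H (Real.exp (v₀ x + v x)) *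
        primFun G (Real.exp (u₀ x + u x)) + 4 * Real.pi * N1 / graphVol μ ∧
    graphLap ω μ v x ≥
      -lam * Real.exp (u₀ x + u x) * G (Real.exp (u₀ x + u x)) *
        primFun H (Real.exp (v₀ x + v x)) + 4 * Real.pi * N2 / graphVol μ

/-- `(uM, vM)` is a maximal solution of `(S_λ)`: it solves the system and any other
solution lies strictly below it. -/
def isMaximalSolution {V : Type*} [Fintype V] (ω : V → V → ℝ) (μ : V → ℝ)
    (G H : ℝ → ℝ) (N1 N2 : ℕ) (u₀ v₀ : V → ℝ) (lam : ℝ) (uM vM : V → ℝ) : Prop :=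
  isSolution ω μ G H N1 N2 u₀ v₀ lam uM vM ∧
    ∀ u' v', isSolution ω μ G H N1 N2 u₀ v₀ lam u' v' → (u', v') ≠ (uM, vM) →
      ∀ x, u' x < uM x ∧ v' x < vM x

/-! ### Auxiliary lemmas -/

section Graph
variable {V : Type*} [Fintype V] {ω : V → V → ℝ} {μ : V → ℝ}

lemma graphLap_zero (x : V) : graphLap ω μ (0 : V → ℝ) x = 0 := by
  simp [graphLap]

lemma graphLap_neg (f : V → ℝ) (x : V) : graphLap ω μ (-f) x = -graphLap ω μ f x := by
  simp only [graphLap, Pi.neg_apply, ← mul_neg]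
  rw [← Finset.sum_neg_distrib]
  congr 1
  exact Finset.sum_congr rfl (fun y _ => by ring)

lemma graphLap_nonpos_at_max (hω : ∀ x y, 0 ≤ ω x y) (hμ : ∀ x, 0 < μ x)
    (f : V → ℝ) (x₀ : V) (hmax : ∀ y, f y ≤ f x₀) : graphLap ω μ f x₀ ≤ 0 := by
  have h := hμ x₀
  apply mul_nonpos_of_nonneg_of_nonpos (by positivity)
  apply Finset.sum_nonpos
  intro y _
  exact mul_nonpos_of_nonneg_of_nonpos (hω _ _) (by linarith [hmax y])

/-- Inverse positivity / comparison principle for `K·id - Δ`. -/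
lemma lap_comparison [Nonempty V] (hω : ∀ x y, 0 ≤ ω x y) (hμ : ∀ x, 0 < μ x)
    {K : ℝ} (hK : 0 < K) (w w' : V → ℝ)
    (h : ∀ x, K * w x - graphLap ω μ w x ≤ K * w' x - graphLap ω μ w' x) :
    ∀ x, w x ≤ w' x := by
  obtain ⟨x₀, hx₀⟩ := Finite.exists_max (fun x => w x - w' x)
  have hlap : graphLap ω μ (w - w') x₀ ≤ 0 :=
    graphLap_nonpos_at_max hω hμ _ x₀ (fun y => hx₀ y)
  have hsub : graphLap ω μ (w - w') x₀ = graphLap ω μ w x₀ - graphLap ω μ w' x₀ := by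
    have h1 : w - w' = w + -w' := by ring
    rw [h1]
    have hadd : graphLap ω μ (w + -w') x₀ = graphLap ω μ w x₀ + graphLap ω μ (-w') x₀ := by
      simp only [graphLap, Pi.add_apply, Pi.neg_apply]
      rw [← mul_add, ← Finset.sum_add_distrib]
      congr 1
      exact Finset.sum_congr rfl (fun y _ => by ring)
    rw [hadd, graphLap_neg]
    ring
  have h0 : w x₀ - w' x₀ ≤ 0 := by
    have := h x₀
    nlinarith [hlap, hsub]
  intro x
  have := hx₀ x
  linarith

/-- Strong positivity: if `(K - Δ) w = g ≥ 0`, `w ≥ 0`, `g > 0` somewhere, and the graph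
is connected, then `w > 0` everywhere. -/
lemma lap_strong_pos (hω : ∀ x y, 0 ≤ ω x y) (hμ : ∀ x, 0 < μ x)
    (hconn : ∀ x y : V, x ≠ y → ∃ (n : ℕ) (c : Fin (n + 1) → V),
      c 0 = x ∧ c (Fin.last n) = y ∧ ∀ i : Fin n, 0 < ω (c i.castSucc) (c i.succ))
    {K : ℝ} (w g : V → ℝ)
    (hLw : ∀ x, K * w x - graphLap ω μ w x = g x)
    (hw : ∀ x, 0 ≤ w x) (hg : ∀ x, 0 ≤ g x)
    (x₁ : V) (hx₁ : 0 < g x₁) : ∀ x, 0 < w x := by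
  have key : ∀ x, w x = 0 → (0 < g x → False) ∧ ∀ y, 0 < ω x y → w y = 0 := by
    intro x hx
    have hsum : ∀ y, 0 ≤ ω x y * w y := fun y => mul_nonneg (hω x y) (hw y)
    have hlapeq : graphLap ω μ w x = (1 / μ x) * ∑ y, ω x y * w y := by
      simp only [graphLap, hx, sub_zero]
    have hlapnn : 0 ≤ graphLap ω μ w x := by
      rw [hlapeq]
      have := hμ x
      exact mul_nonneg (by positivity) (Finset.sum_nonneg (fun y _ => hsum y))
    have hLx := hLw x
    rw [hx, mul_zero, zero_sub] at hLx
    have hg0 : g x = 0 := le_antisymm (by linarith) (hg x)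
    have hlap0 : graphLap ω μ w x = 0 := by linarith
    have hsum0 : ∑ y, ω x y * w y = 0 := by
      rw [hlapeq] at hlap0
      have hμx := hμ x
      have hne : (1 / μ x) ≠ 0 := by positivity
      exact (mul_eq_zero.mp hlap0).resolve_left hne
    constructor
    · intro h; rw [hg0] at h; exact lt_irrefl 0 h
    · intro y hy
      have h :=
        (Finset.sum_eq_zero_iff_of_nonneg (fun y _ => hsum y)).mp hsum0 y (Finset.mem_univ y)
      rcases mul_eq_zero.mp h with h | h
      · exact absurd h (ne_of_gt hy)
      · exact h
  have hwx₁ : 0 < w x₁ := by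
    rcases (hw x₁).lt_or_eq with h | h
    · exact h
    · exact absurd hx₁ (fun hh => (key x₁ h.symm).1 hh)
  intro x
  rcases (hw x).lt_or_eq with h | h
  · exact h
  · exfalso
    have hx0 : w x = 0 := h.symm
    rcases eq_or_ne x x₁ with rfl | hne
    · exact (key x hx0).1 hx₁
    · obtain ⟨n, c, hc0, hclast, hstep⟩ := hconn x x₁ hne
      have hzero : ∀ k : ℕ, (hk : k < n + 1) → w (c ⟨k, hk⟩) = 0 := by
        intro k
        induction k with
        | zero => intro hk; rw [show (⟨0, hk⟩ : Fin (n+1)) = 0 from rfl, hc0]; exact hx0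
        | succ m ih =>
          intro hk
          have hm : m < n + 1 := by omega
          have hmn : m < n := by omega
          have hedge := hstep ⟨m, hmn⟩
          have hcast : (Fin.castSucc ⟨m, hmn⟩ : Fin (n+1)) = ⟨m, hm⟩ := rfl
          have hsucc : (Fin.succ ⟨m, hmn⟩ : Fin (n+1)) = ⟨m+1, hk⟩ := rfl
          rw [hcast, hsucc] at hedge
          exact (key _ (ih hm)).2 _ hedge
      have hzx₁ : w x₁ = 0 := by
        rw [← hclast]
        have hl : (Fin.last n : Fin (n+1)) = ⟨n, by omega⟩ := rfl
        rw [hl]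
        exact hzero n (by omega)
      linarith

/-- The linear operator `K·id − Δ` as a linear map. -/
noncomputable def lapOp (ω : V → V → ℝ) (μ : V → ℝ) (K : ℝ) :
    (V → ℝ) →ₗ[ℝ] (V → ℝ) where
  toFun f := fun x => K * f x - graphLap ω μ f x
  map_add' f g := by
    funext x
    simp only [graphLap, Pi.add_apply]
    have h1 : (∑ y, ω x y * ((f y + g y) - (f x + g x)))
        = (∑ y, ω x y * (f y - f x)) + (∑ y, ω x y * (g y - g x)) := by
      rw [← Finset.sum_add_distrib]
      exact Finset.sum_congr rfl (fun y _ => by ring)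
    rw [h1]
    ring
  map_smul' r f := by
    funext x
    simp only [graphLap, Pi.smul_apply, smul_eq_mul, RingHom.id_apply]
    have h1 : (∑ y, ω x y * (r * f y - r * f x)) = r * ∑ y, ω x y * (f y - f x) := by
      rw [Finset.mul_sum]
      exact Finset.sum_congr rfl (fun y _ => by ring)
    rw [h1]
    ring

lemma lapOp_apply (ω : V → V → ℝ) (μ : V → ℝ) (K : ℝ) (f : V → ℝ) (x : V) :
    lapOp ω μ K f x = K * f x - graphLap ω μ f x := rfl

end Graph

section PF
variable {G : ℝ → ℝ}

lemma primFun_integrand_cont (hGc : ContinuousOn G (Set.Ici 0)) :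
    Continuous fun s : ℝ => 2 * s * G (s ^ 2) := by
  apply Continuous.mul (by continuity)
  rw [← continuousOn_univ]
  exact hGc.comp (continuous_pow 2).continuousOn (fun s _ => sq_nonneg s)

lemma primFun_one : primFun G 1 = 0 := by
  simp [primFun, Real.sqrt_one]

lemma primFun_nonneg (hGpos : ∀ s, 0 ≤ s → 0 < G s) {t : ℝ} (ht1 : t ≤ 1) :
    0 ≤ primFun G t := by
  apply intervalIntegral.integral_nonneg
  · exact Real.sqrt_le_one.mpr ht1
  · intro s hs
    have hs0 : 0 ≤ s := le_trans (Real.sqrt_nonneg t) hs.1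
    have := hGpos (s ^ 2) (sq_nonneg s)
    nlinarith

lemma primFun_pos (hGc : ContinuousOn G (Set.Ici 0)) (hGpos : ∀ s, 0 ≤ s → 0 < G s)
    {t : ℝ} (ht0 : 0 ≤ t) (ht1 : t < 1) : 0 < primFun G t := by
  apply intervalIntegral.intervalIntegral_pos_of_pos_on
    ((primFun_integrand_cont hGc).intervalIntegrable _ _)
  · intro s hs
    have hs0 : 0 ≤ s := le_trans (Real.sqrt_nonneg t) hs.1.le
    have := hGpos (s ^ 2) (sq_nonneg s)
    have h1 : Real.sqrt t < s := hs.1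
    nlinarith [Real.sqrt_nonneg t]
  · calc Real.sqrt t < Real.sqrt 1 := Real.sqrt_lt_sqrt ht0 ht1
      _ = 1 := Real.sqrt_one

lemma primFun_diff (hGc : ContinuousOn G (Set.Ici 0)) {t₁ t₂ : ℝ} :
    primFun G t₁ - primFun G t₂
      = ∫ s in Real.sqrt t₁..Real.sqrt t₂, 2 * s * G (s ^ 2) := by
  have hi := (primFun_integrand_cont hGc).intervalIntegrable (μ := MeasureTheory.volume)
  rw [primFun, primFun,
    ← intervalIntegral.integral_add_adjacent_intervals (hi (Real.sqrt t₁) (Real.sqrt t₂))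
      (hi (Real.sqrt t₂) 1)]
  ring

lemma primFun_sub_le (hGc : ContinuousOn G (Set.Ici 0)) (hGpos : ∀ s, 0 ≤ s → 0 < G s)
    (hGmono : MonotoneOn G (Set.Ici 0)) {t₁ t₂ : ℝ}
    (h0 : 0 ≤ t₁) (h12 : t₁ ≤ t₂) (h21 : t₂ ≤ 1) :
    primFun G t₁ - primFun G t₂ ≤ G 1 * (t₂ - t₁) := by
  rw [primFun_diff hGc]
  have hsq : Real.sqrt t₁ ≤ Real.sqrt t₂ := Real.sqrt_le_sqrt h12
  have hG1 : 0 < G 1 := hGpos 1 zero_le_one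
  have hcont2 : Continuous fun s : ℝ => G 1 * (2 * s) := by continuity
  calc (∫ s in Real.sqrt t₁..Real.sqrt t₂, 2 * s * G (s ^ 2))
      ≤ ∫ s in Real.sqrt t₁..Real.sqrt t₂, G 1 * (2 * s) := by
        apply intervalIntegral.integral_mono_on hsq
          ((primFun_integrand_cont hGc).intervalIntegrable _ _)
          (hcont2.intervalIntegrable _ _)
        intro s hs
        have hs0 : 0 ≤ s := le_trans (Real.sqrt_nonneg t₁) hs.1
        have hs1 : s ≤ 1 := le_trans hs.2 (Real.sqrt_le_one.mpr h21)
        have hsq1 : s ^ 2 ≤ 1 := by nlinarith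
        have := hGmono (Set.mem_Ici.mpr (sq_nonneg s)) (Set.mem_Ici.mpr zero_le_one) hsq1
        nlinarith
    _ = G 1 * (t₂ - t₁) := by
        rw [intervalIntegral.integral_const_mul]
        have h3 : (∫ s in Real.sqrt t₁..Real.sqrt t₂, 2 * s)
            = Real.sqrt t₂ ^ 2 - Real.sqrt t₁ ^ 2 := by
          have h2 : (∫ s in Real.sqrt t₁..Real.sqrt t₂, (2:ℝ) * s)
              = 2 * ∫ s in Real.sqrt t₁..Real.sqrt t₂, s :=
            intervalIntegral.integral_const_mul 2 _
          rw [h2, integral_id]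
          ring
        rw [h3, Real.sq_sqrt (le_trans h0 h12), Real.sq_sqrt h0]

end PF

lemma exp_sub_exp_le {a b : ℝ} (hab : a ≤ b) (hb : b ≤ 0) :
    Real.exp b - Real.exp a ≤ b - a := by
  have h1 : (a - b) + 1 ≤ Real.exp (a - b) := Real.add_one_le_exp _
  have h2 : Real.exp b ≤ 1 := Real.exp_le_one_iff.mpr hb
  have h3 : Real.exp a = Real.exp b * Real.exp (a - b) := by
    rw [← Real.exp_add]; ring_nf
  nlinarith [Real.exp_pos b]

/-- The nonlinear pointwise operator `F(u,v) = K u + λ e^{v₀+v} H(e^{v₀+v}) g_G(e^{u₀+u}) - c`. -/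
noncomputable def Ffun {V : Type*} (G H : ℝ → ℝ) (u₀ v₀ : V → ℝ) (lam K c : ℝ)
    (u v : V → ℝ) : V → ℝ := fun x =>
  K * u x + lam * Real.exp (v₀ x + v x) * H (Real.exp (v₀ x + v x)) *
    primFun G (Real.exp (u₀ x + u x)) - c

lemma Ffun_mono {V : Type*} (G H : ℝ → ℝ) (u₀ v₀ : V → ℝ) (lam K c : ℝ)
    (hGpos : ∀ s, 0 ≤ s → 0 < G s) (hHpos : ∀ s, 0 ≤ s → 0 < H s)
    (hGmono : MonotoneOn G (Set.Ici 0)) (hHmono : MonotoneOn H (Set.Ici 0))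
    (hGc : ContinuousOn G (Set.Ici 0))
    (hlam : 0 < lam) (hK : lam * G 1 * H 1 ≤ K)
    (u v u' v' : V → ℝ)
    (hu' : ∀ x, u₀ x + u' x ≤ 0) (hv : ∀ x, v₀ x + v x ≤ 0)
    (huu : ∀ x, u x ≤ u' x) (hvv : ∀ x, v x ≤ v' x) (x : V) :
    Ffun G H u₀ v₀ lam K c u v x ≤ Ffun G H u₀ v₀ lam K c u' v' x := by
  simp only [Ffun]
  set U : ℝ := u₀ x + u x with hU
  set U' : ℝ := u₀ x + u' x with hU'
  set W : ℝ := v₀ x + v x with hW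
  set W' : ℝ := v₀ x + v' x with hW'
  have hUU' : U ≤ U' := by simp only [hU, hU']; linarith [huu x]
  have hWW' : W ≤ W' := by simp only [hW, hW']; linarith [hvv x]
  have hU'0 : U' ≤ 0 := hu' x
  have hW0 : W ≤ 0 := hv x
  set A : ℝ := lam * Real.exp W * H (Real.exp W) with hA
  set A' : ℝ := lam * Real.exp W' * H (Real.exp W') with hA'
  have hHW : 0 < H (Real.exp W) := hHpos _ (Real.exp_pos W).le
  have hHW' : 0 < H (Real.exp W') := hHpos _ (Real.exp_pos W').le
  have hApos : 0 < A := by positivity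
  have hAA' : A ≤ A' := by
    have he : Real.exp W ≤ Real.exp W' := Real.exp_le_exp.mpr hWW'
    have hh : H (Real.exp W) ≤ H (Real.exp W') :=
      hHmono (Set.mem_Ici.mpr (Real.exp_pos W).le) (Set.mem_Ici.mpr (Real.exp_pos W').le) he
    rw [hA, hA']
    exact mul_le_mul (mul_le_mul_of_nonneg_left he hlam.le) hh hHW.le
      (by positivity)
  have hAbd : A ≤ lam * H 1 := by
    have he : Real.exp W ≤ 1 := Real.exp_le_one_iff.mpr hW0
    have hh : H (Real.exp W) ≤ H 1 :=
      hHmono (Set.mem_Ici.mpr (Real.exp_pos W).le) (Set.mem_Ici.mpr zero_le_one) he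
    rw [hA]
    have h1 : lam * Real.exp W ≤ lam * 1 := by nlinarith [Real.exp_pos W]
    calc lam * Real.exp W * H (Real.exp W) ≤ (lam * 1) * H 1 :=
          mul_le_mul h1 hh hHW.le (by positivity)
      _ = lam * H 1 := by ring
  set g : ℝ := primFun G (Real.exp U) with hg
  set g' : ℝ := primFun G (Real.exp U') with hg'
  have hg'0 : 0 ≤ g' := primFun_nonneg hGpos (Real.exp_le_one_iff.mpr hU'0)
  have hdiff : g - g' ≤ G 1 * (Real.exp U' - Real.exp U) :=
    primFun_sub_le hGc hGpos hGmono (Real.exp_pos U).le (Real.exp_le_exp.mpr hUU')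
      (Real.exp_le_one_iff.mpr hU'0)
  have hexp : Real.exp U' - Real.exp U ≤ U' - U := exp_sub_exp_le hUU' hU'0
  have hG1 : 0 < G 1 := hGpos 1 zero_le_one
  have hd : U' - U = u' x - u x := by simp only [hU, hU']; ring
  have hstep1 : A * (g - g') ≤ A * (G 1 * (u' x - u x)) := by
    apply mul_le_mul_of_nonneg_left _ hApos.le
    calc g - g' ≤ G 1 * (Real.exp U' - Real.exp U) := hdiff
      _ ≤ G 1 * (U' - U) := by nlinarith
      _ = G 1 * (u' x - u x) := by rw [hd]
  have hdx : 0 ≤ u' x - u x := by linarith [huu x]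
  have hstep2 : A * (G 1 * (u' x - u x)) ≤ lam * H 1 * (G 1 * (u' x - u x)) :=
    mul_le_mul_of_nonneg_right hAbd (by positivity)
  have hstep3 : lam * H 1 * (G 1 * (u' x - u x)) = lam * G 1 * H 1 * (u' x - u x) := by ring
  have hstep4 : lam * G 1 * H 1 * (u' x - u x) ≤ K * (u' x - u x) :=
    mul_le_mul_of_nonneg_right hK hdx
  have hcross : 0 ≤ (A' - A) * g' := mul_nonneg (by linarith) hg'0
  nlinarith

set_option maxHeartbeats 1600000 in
theorem stmt_9
    {V : Type*} [Fintype V] [DecidableEq V]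
    (hV : 1 < Fintype.card V)
    (ω : V → V → ℝ) (μ : V → ℝ)
    (hω_nonneg : ∀ x y, 0 ≤ ω x y)
    (hω_symm : ∀ x y, ω x y = ω y x)
    (hω_diag : ∀ x, ω x x = 0)
    (hconn : ∀ x y : V, x ≠ y → ∃ (n : ℕ) (c : Fin (n + 1) → V),
      c 0 = x ∧ c (Fin.last n) = y ∧ ∀ i : Fin n, 0 < ω (c i.castSucc) (c i.succ))
    (hμ : ∀ x, 0 < μ x)
    (G H : ℝ → ℝ)
    (hGpos : ∀ s, 0 ≤ s → 0 < G s) (hHpos : ∀ s, 0 ≤ s → 0 < H s)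
    (hGmono : StrictMonoOn G (Set.Ici 0)) (hHmono : StrictMonoOn H (Set.Ici 0))
    (hGsmooth : ContDiffOn ℝ (⊤ : ℕ∞) G (Set.Ici 0)) (hHsmooth : ContDiffOn ℝ (⊤ : ℕ∞) H (Set.Ici 0))
    (N1 N2 : ℕ) (hN1 : 0 < N1) (hN2 : 0 < N2)
    (p1 : Fin N1 → V) (p2 : Fin N2 → V)
    (u₀ v₀ : V → ℝ)
    (hu₀ : ∀ x, graphLap ω μ u₀ x =
      -(4 * Real.pi * N1) / graphVol μ + 4 * Real.pi * ∑ j, diracDelta μ (p1 j) x)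
    (hv₀ : ∀ x, graphLap ω μ v₀ x =
      -(4 * Real.pi * N2) / graphVol μ + 4 * Real.pi * ∑ j, diracDelta μ (p2 j) x)
    (lam1 lam2 : ℝ) (hlam2 : 0 < lam2) (hlam21 : lam2 < lam1)
    (u2 v2 : V → ℝ) (hsol2 : isSolution ω μ G H N1 N2 u₀ v₀ lam2 u2 v2)
    (hu2 : ∀ x, u₀ x + u2 x ≤ 0) (hv2 : ∀ x, v₀ x + v2 x ≤ 0)
    (u1 v1 : V → ℝ) (hmax1 : isMaximalSolution ω μ G H N1 N2 u₀ v₀ lam1 u1 v1) :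
    ∀ x, u2 x < u1 x ∧ v2 x < v1 x := by
  classical
  have hVne : Nonempty V := Fintype.card_pos_iff.mp (by omega)
  have hG1 : 0 < G 1 := hGpos 1 zero_le_one
  have hH1 : 0 < H 1 := hHpos 1 zero_le_one
  have hlam1 : 0 < lam1 := lt_trans hlam2 hlam21
  have hGm : MonotoneOn G (Set.Ici 0) := hGmono.monotoneOn
  have hHm : MonotoneOn H (Set.Ici 0) := hHmono.monotoneOn
  have hGc : ContinuousOn G (Set.Ici 0) := hGsmooth.continuousOn
  have hHc : ContinuousOn H (Set.Ici 0) := hHsmooth.continuousOn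
  set K : ℝ := lam1 * G 1 * H 1 + 1 with hKdef
  have hK0 : 0 < K := by positivity
  have hKG : lam1 * G 1 * H 1 ≤ K := by linarith
  have hKH : lam1 * H 1 * G 1 ≤ K := by nlinarith
  set c₁ : ℝ := 4 * Real.pi * N1 / graphVol μ with hc₁
  set c₂ : ℝ := 4 * Real.pi * N2 / graphVol μ with hc₂
  -- the linear operator and its inverse
  have hLinj : Function.Injective (lapOp ω μ K (V := V)) := by
    rw [injective_iff_map_eq_zero]
    intro f hf
    have h0 : ∀ x, K * f x - graphLap ω μ f x = 0 := fun x => congrFun hf x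
    have h1 : ∀ x, f x ≤ 0 := by
      apply lap_comparison hω_nonneg hμ hK0 f 0
      intro x
      rw [graphLap_zero]
      rw [h0 x]
      simp
    have h2 : ∀ x, 0 ≤ f x := by
      apply lap_comparison hω_nonneg hμ hK0 0 f
      intro x
      rw [graphLap_zero]
      rw [h0 x]
      simp
    funext x
    exact le_antisymm (h1 x) (h2 x)
  have hLsurj : Function.Surjective (lapOp ω μ K (V := V)) :=
    LinearMap.injective_iff_surjective.mp hLinj
  set e : (V → ℝ) ≃ₗ[ℝ] (V → ℝ) :=
    LinearEquiv.ofBijective (lapOp ω μ K) ⟨hLinj, hLsurj⟩ with he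
  have hLe : ∀ z : V → ℝ, lapOp ω μ K (e.symm z) = z := fun z => e.apply_symm_apply z
  have hLes : ∀ f : V → ℝ, e.symm (lapOp ω μ K f) = f := fun f => e.symm_apply_apply f
  have hsymm_mono : ∀ z z' : V → ℝ, (∀ x, z x ≤ z' x) → ∀ x, e.symm z x ≤ e.symm z' x := by
    intro z z' h
    apply lap_comparison hω_nonneg hμ hK0
    intro x
    have h1 := congrFun (hLe z) x
    have h2 := congrFun (hLe z') x
    rw [lapOp_apply] at h1 h2
    rw [h1, h2]
    exact h x
  -- the two components of the iteration map
  set Tu : (V → ℝ) → (V → ℝ) → (V → ℝ) :=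
    fun u v => e.symm (Ffun G H u₀ v₀ lam1 K c₁ u v) with hTu
  set Tv : (V → ℝ) → (V → ℝ) → (V → ℝ) :=
    fun u v => e.symm (Ffun H G v₀ u₀ lam1 K c₂ v u) with hTv
  -- (u2, v2) is a lower solution for lam1
  have hlow_u : ∀ x, lapOp ω μ K u2 x ≤ Ffun G H u₀ v₀ lam1 K c₁ u2 v2 x := by
    intro x
    have hs := (hsol2 x).1
    have hE : (0:ℝ) < Real.exp (v₀ x + v2 x) := Real.exp_pos _
    have hH' : 0 < H (Real.exp (v₀ x + v2 x)) := hHpos _ hE.le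
    have hgnn : 0 ≤ primFun G (Real.exp (u₀ x + u2 x)) :=
      primFun_nonneg hGpos (Real.exp_le_one_iff.mpr (hu2 x))
    rw [lapOp_apply]
    simp only [Ffun]
    rw [hs]
    have key : 0 ≤ (lam1 - lam2) *
        (Real.exp (v₀ x + v2 x) * H (Real.exp (v₀ x + v2 x)) *
          primFun G (Real.exp (u₀ x + u2 x))) :=
      mul_nonneg (by linarith) (mul_nonneg (mul_nonneg hE.le hH'.le) hgnn)
    nlinarith [key]
  have hlow_v : ∀ x, lapOp ω μ K v2 x ≤ Ffun H G v₀ u₀ lam1 K c₂ v2 u2 x := by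
    intro x
    have hs := (hsol2 x).2
    have hE : (0:ℝ) < Real.exp (u₀ x + u2 x) := Real.exp_pos _
    have hG' : 0 < G (Real.exp (u₀ x + u2 x)) := hGpos _ hE.le
    have hgnn : 0 ≤ primFun H (Real.exp (v₀ x + v2 x)) :=
      primFun_nonneg hHpos (Real.exp_le_one_iff.mpr (hv2 x))
    rw [lapOp_apply]
    simp only [Ffun]
    rw [hs]
    have key : 0 ≤ (lam1 - lam2) *
        (Real.exp (u₀ x + u2 x) * G (Real.exp (u₀ x + u2 x)) *
          primFun H (Real.exp (v₀ x + v2 x))) :=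
      mul_nonneg (by linarith) (mul_nonneg (mul_nonneg hE.le hG'.le) hgnn)
    nlinarith [key]
  -- (-u₀, -v₀) is an upper solution for lam1
  have hupp_u : ∀ x, Ffun G H u₀ v₀ lam1 K c₁ (-u₀) (-v₀) x ≤ lapOp ω μ K (-u₀) x := by
    intro x
    rw [lapOp_apply]
    simp only [Ffun, Pi.neg_apply]
    rw [graphLap_neg, hu₀ x]
    have h1 : u₀ x + -u₀ x = 0 := by ring
    rw [h1, Real.exp_zero, primFun_one, mul_zero]
    have hδ : (0:ℝ) ≤ ∑ j, diracDelta μ (p1 j) x := by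
      apply Finset.sum_nonneg
      intro j _
      unfold diracDelta
      split
      · have := hμ (p1 j); positivity
      · exact le_rfl
    have hπ : (0:ℝ) < Real.pi := Real.pi_pos
    have hnd : -(4 * Real.pi * (N1:ℝ)) / graphVol μ = -(4 * Real.pi * N1 / graphVol μ) :=
      neg_div _ _
    have hprod : (0:ℝ) ≤ 4 * Real.pi * ∑ j, diracDelta μ (p1 j) x :=
      mul_nonneg (by positivity) hδ
    linarith [hprod, hnd.le, hnd.ge, hc₁.le, hc₁.ge]
  have hupp_v : ∀ x, Ffun H G v₀ u₀ lam1 K c₂ (-v₀) (-u₀) x ≤ lapOp ω μ K (-v₀) x := by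
    intro x
    rw [lapOp_apply]
    simp only [Ffun, Pi.neg_apply]
    rw [graphLap_neg, hv₀ x]
    have h1 : v₀ x + -v₀ x = 0 := by ring
    rw [h1, Real.exp_zero, primFun_one, mul_zero]
    have hδ : (0:ℝ) ≤ ∑ j, diracDelta μ (p2 j) x := by
      apply Finset.sum_nonneg
      intro j _
      unfold diracDelta
      split
      · have := hμ (p2 j); positivity
      · exact le_rfl
    have hπ : (0:ℝ) < Real.pi := Real.pi_pos
    have hnd : -(4 * Real.pi * (N2:ℝ)) / graphVol μ = -(4 * Real.pi * N2 / graphVol μ) :=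
      neg_div _ _
    have hprod : (0:ℝ) ≤ 4 * Real.pi * ∑ j, diracDelta μ (p2 j) x :=
      mul_nonneg (by positivity) hδ
    linarith [hprod, hnd.le, hnd.ge, hc₂.le, hc₂.ge]
  -- the order box [ (u2,v2), (-u₀,-v₀) ]
  have hu2b : u2 ≤ (-u₀ : V → ℝ) := by
    intro x
    simp only [Pi.neg_apply]
    linarith [hu2 x]
  have hv2b : v2 ≤ (-v₀ : V → ℝ) := by
    intro x
    simp only [Pi.neg_apply]
    linarith [hv2 x]
  haveI hf1 : Fact (u2 ≤ (-u₀ : V → ℝ)) := ⟨hu2b⟩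
  haveI hf2 : Fact (v2 ≤ (-v₀ : V → ℝ)) := ⟨hv2b⟩
  have hboxu : ∀ w : V → ℝ, w ≤ (-u₀ : V → ℝ) → ∀ x, u₀ x + w x ≤ 0 := by
    intro w hw x
    have := hw x
    simp only [Pi.neg_apply] at this
    linarith
  have hboxv : ∀ w : V → ℝ, w ≤ (-v₀ : V → ℝ) → ∀ x, v₀ x + w x ≤ 0 := by
    intro w hw x
    have := hw x
    simp only [Pi.neg_apply] at this
    linarith
  -- monotonicity of the two components
  have hTu_mono : ∀ u v u' v' : V → ℝ, (∀ x, u₀ x + u' x ≤ 0) → (∀ x, v₀ x + v x ≤ 0) →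
      (∀ x, u x ≤ u' x) → (∀ x, v x ≤ v' x) → ∀ x, Tu u v x ≤ Tu u' v' x := by
    intro u v u' v' h1 h2 h3 h4
    exact hsymm_mono _ _
      (Ffun_mono G H u₀ v₀ lam1 K c₁ hGpos hHpos hGm hHm hGc hlam1 hKG u v u' v' h1 h2 h3 h4)
  have hTv_mono : ∀ u v u' v' : V → ℝ, (∀ x, v₀ x + v' x ≤ 0) → (∀ x, u₀ x + u x ≤ 0) →
      (∀ x, u x ≤ u' x) → (∀ x, v x ≤ v' x) → ∀ x, Tv u v x ≤ Tv u' v' x := by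
    intro u v u' v' h1 h2 h3 h4
    exact hsymm_mono _ _
      (Ffun_mono H G v₀ u₀ lam1 K c₂ hHpos hGpos hHm hGm hHc hlam1 hKH v u v' u' h1 h2 h4 h3)
  -- lower / upper solution translate to the fixed point form
  have hTa_u : ∀ x, u2 x ≤ Tu u2 v2 x := by
    intro x
    have h1 := hsymm_mono _ _ hlow_u x
    rwa [hLes u2] at h1
  have hTa_v : ∀ x, v2 x ≤ Tv u2 v2 x := by
    intro x
    have h1 := hsymm_mono _ _ hlow_v x
    rwa [hLes v2] at h1
  have hTb_u : ∀ x, Tu (-u₀) (-v₀) x ≤ (-u₀ : V → ℝ) x := by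
    intro x
    have h1 := hsymm_mono _ _ hupp_u x
    rwa [hLes (-u₀)] at h1
  have hTb_v : ∀ x, Tv (-u₀) (-v₀) x ≤ (-v₀ : V → ℝ) x := by
    intro x
    have h1 := hsymm_mono _ _ hupp_v x
    rwa [hLes (-v₀)] at h1
  -- the iteration map preserves the box
  have hmemu : ∀ uu vv : V → ℝ, uu ∈ Set.Icc u2 (-u₀ : V → ℝ) →
      vv ∈ Set.Icc v2 (-v₀ : V → ℝ) → Tu uu vv ∈ Set.Icc u2 (-u₀ : V → ℝ) := by
    intro uu vv huu hvv
    obtain ⟨hu_l, hu_r⟩ := huu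
    obtain ⟨hv_l, hv_r⟩ := hvv
    constructor
    · intro x
      calc u2 x ≤ Tu u2 v2 x := hTa_u x
        _ ≤ Tu uu vv x := hTu_mono u2 v2 uu vv (hboxu _ hu_r) (fun y => hv2 y)
            (fun y => hu_l y) (fun y => hv_l y) x
    · intro x
      calc Tu uu vv x ≤ Tu (-u₀) (-v₀) x := hTu_mono uu vv (-u₀) (-v₀)
            (hboxu _ le_rfl) (hboxv _ hv_r) (fun y => hu_r y) (fun y => hv_r y) x
        _ ≤ (-u₀ : V → ℝ) x := hTb_u x
  have hmemv : ∀ uu vv : V → ℝ, uu ∈ Set.Icc u2 (-u₀ : V → ℝ) →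
      vv ∈ Set.Icc v2 (-v₀ : V → ℝ) → Tv uu vv ∈ Set.Icc v2 (-v₀ : V → ℝ) := by
    intro uu vv huu hvv
    obtain ⟨hu_l, hu_r⟩ := huu
    obtain ⟨hv_l, hv_r⟩ := hvv
    constructor
    · intro x
      calc v2 x ≤ Tv u2 v2 x := hTa_v x
        _ ≤ Tv uu vv x := hTv_mono u2 v2 uu vv (hboxv _ hv_r) (fun y => hu2 y)
            (fun y => hu_l y) (fun y => hv_l y) x
    · intro x
      calc Tv uu vv x ≤ Tv (-u₀) (-v₀) x := hTv_mono uu vv (-u₀) (-v₀)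
            (hboxv _ le_rfl) (hboxu _ hu_r) (fun y => hu_r y) (fun y => hv_r y) x
        _ ≤ (-v₀ : V → ℝ) x := hTb_v x
  -- Knaster-Tarski on the box
  let Phi : (↥(Set.Icc u2 (-u₀ : V → ℝ)) × ↥(Set.Icc v2 (-v₀ : V → ℝ))) →o
      (↥(Set.Icc u2 (-u₀ : V → ℝ)) × ↥(Set.Icc v2 (-v₀ : V → ℝ))) :=
    { toFun := fun p => (⟨Tu p.1.1 p.2.1, hmemu _ _ p.1.2 p.2.2⟩,
                         ⟨Tv p.1.1 p.2.1, hmemv _ _ p.1.2 p.2.2⟩),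
      monotone' := by
        intro p q hpq
        have h1 : (p.1 : V → ℝ) ≤ (q.1 : V → ℝ) := hpq.1
        have h2 : (p.2 : V → ℝ) ≤ (q.2 : V → ℝ) := hpq.2
        constructor
        · show Tu (p.1 : V → ℝ) p.2 ≤ Tu (q.1 : V → ℝ) q.2
          intro x
          exact hTu_mono _ _ _ _ (hboxu _ q.1.2.2) (hboxv _ p.2.2.2) h1 h2 x
        · show Tv (p.1 : V → ℝ) p.2 ≤ Tv (q.1 : V → ℝ) q.2
          intro x
          exact hTv_mono _ _ _ _ (hboxv _ q.2.2.2) (hboxu _ p.1.2.2) h1 h2 x }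
  set wst := OrderHom.lfp Phi with hwst
  have hfix : Phi wst = wst := OrderHom.map_lfp Phi
  set ustar : V → ℝ := (wst.1 : V → ℝ) with hustar
  set vstar : V → ℝ := (wst.2 : V → ℝ) with hvstar
  have hfixu : Tu ustar vstar = ustar := by
    exact congrArg
      (fun p : (↥(Set.Icc u2 (-u₀ : V → ℝ)) × ↥(Set.Icc v2 (-v₀ : V → ℝ))) => (p.1 : V → ℝ)) hfix
  have hfixv : Tv ustar vstar = vstar := by
    exact congrArg
      (fun p : (↥(Set.Icc u2 (-u₀ : V → ℝ)) × ↥(Set.Icc v2 (-v₀ : V → ℝ))) => (p.2 : V → ℝ)) hfix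
  have hstar_mem_u : u2 ≤ ustar ∧ ustar ≤ (-u₀ : V → ℝ) := wst.1.2
  have hstar_mem_v : v2 ≤ vstar ∧ vstar ≤ (-v₀ : V → ℝ) := wst.2.2
  -- the fixed point is a solution of (S_{lam1})
  have hLu : lapOp ω μ K ustar = Ffun G H u₀ v₀ lam1 K c₁ ustar vstar := by
    conv_lhs => rw [← hfixu]
    exact hLe _
  have hLv : lapOp ω μ K vstar = Ffun H G v₀ u₀ lam1 K c₂ vstar ustar := by
    conv_lhs => rw [← hfixv]
    exact hLe _
  have hsolstar : isSolution ω μ G H N1 N2 u₀ v₀ lam1 ustar vstar := by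
    intro x
    have h1 := congrFun hLu x
    have h2 := congrFun hLv x
    rw [lapOp_apply] at h1 h2
    simp only [Ffun] at h1 h2
    constructor
    · linarith [h1, hc₁.le, hc₁.ge]
    · linarith [h2, hc₂.le, hc₂.ge]
  -- strictness points
  have hxstar : ∃ x, u₀ x + u2 x < 0 := by
    by_contra hcon
    push_neg at hcon
    have heq : ∀ x, u₀ x + u2 x = 0 := fun x => le_antisymm (hu2 x) (hcon x)
    have hu2eq : u2 = -u₀ := by
      funext x
      have := heq x
      simp only [Pi.neg_apply]
      linarith
    have h1 := (hsol2 (p1 ⟨0, hN1⟩)).1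
    rw [hu2eq, graphLap_neg, hu₀ (p1 ⟨0, hN1⟩)] at h1
    have h2 : u₀ (p1 ⟨0, hN1⟩) + (-u₀ : V → ℝ) (p1 ⟨0, hN1⟩) = 0 := by
      simp only [Pi.neg_apply]; ring
    rw [h2, Real.exp_zero, primFun_one, mul_zero] at h1
    have hδ : (0:ℝ) < ∑ j, diracDelta μ (p1 j) (p1 ⟨0, hN1⟩) := by
      apply Finset.sum_pos'
      · intro j _
        unfold diracDelta
        split
        · exact (one_div_pos.mpr (hμ (p1 j))).le
        · exact le_rfl
      · refine ⟨⟨0, hN1⟩, Finset.mem_univ _, ?_⟩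
        simp only [diracDelta, if_pos rfl]
        exact one_div_pos.mpr (hμ (p1 ⟨0, hN1⟩))
    have hπ := Real.pi_pos
    have hd4 : (0:ℝ) < 4 * Real.pi * ∑ j, diracDelta μ (p1 j) (p1 ⟨0, hN1⟩) :=
      mul_pos (by positivity : (0:ℝ) < 4 * Real.pi) hδ
    rw [neg_div] at h1
    linarith [h1, hd4, hc₁.le, hc₁.ge]
  have hystar : ∃ x, v₀ x + v2 x < 0 := by
    by_contra hcon
    push_neg at hcon
    have heq : ∀ x, v₀ x + v2 x = 0 := fun x => le_antisymm (hv2 x) (hcon x)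
    have hv2eq : v2 = -v₀ := by
      funext x
      have := heq x
      simp only [Pi.neg_apply]
      linarith
    have h1 := (hsol2 (p2 ⟨0, hN2⟩)).2
    rw [hv2eq, graphLap_neg, hv₀ (p2 ⟨0, hN2⟩)] at h1
    have h2 : v₀ (p2 ⟨0, hN2⟩) + (-v₀ : V → ℝ) (p2 ⟨0, hN2⟩) = 0 := by
      simp only [Pi.neg_apply]; ring
    rw [h2, Real.exp_zero, primFun_one, mul_zero] at h1
    have hδ : (0:ℝ) < ∑ j, diracDelta μ (p2 j) (p2 ⟨0, hN2⟩) := by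
      apply Finset.sum_pos'
      · intro j _
        unfold diracDelta
        split
        · exact (one_div_pos.mpr (hμ (p2 j))).le
        · exact le_rfl
      · refine ⟨⟨0, hN2⟩, Finset.mem_univ _, ?_⟩
        simp only [diracDelta, if_pos rfl]
        exact one_div_pos.mpr (hμ (p2 ⟨0, hN2⟩))
    have hπ := Real.pi_pos
    have hd4 : (0:ℝ) < 4 * Real.pi * ∑ j, diracDelta μ (p2 j) (p2 ⟨0, hN2⟩) :=
      mul_pos (by positivity : (0:ℝ) < 4 * Real.pi) hδ
    rw [neg_div] at h1
    linarith [h1, hd4, hc₂.le, hc₂.ge]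
  obtain ⟨xs, hxs⟩ := hxstar
  obtain ⟨ys, hys⟩ := hystar
  -- strict gap between (u2,v2) and its image
  have hgap_u : ∀ x, u2 x < Tu u2 v2 x := by
    set d : V → ℝ := Tu u2 v2 - u2 with hd
    set gg : V → ℝ := fun x => Ffun G H u₀ v₀ lam1 K c₁ u2 v2 x - lapOp ω μ K u2 x with hgg
    have hLd : ∀ x, K * d x - graphLap ω μ d x = gg x := by
      intro x
      have h3 : lapOp ω μ K d x = lapOp ω μ K (Tu u2 v2) x - lapOp ω μ K u2 x := by
        rw [hd, map_sub]; rfl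
      have h2 : lapOp ω μ K (Tu u2 v2) = Ffun G H u₀ v₀ lam1 K c₁ u2 v2 := hLe _
      rw [← lapOp_apply, h3, h2]
    have hggnn : ∀ x, 0 ≤ gg x := by
      intro x
      simp only [hgg]
      linarith [hlow_u x]
    have hdnn : ∀ x, 0 ≤ d x := by
      intro x
      simp only [hd, Pi.sub_apply]
      linarith [hTa_u x]
    have hggpos : 0 < gg xs := by
      simp only [hgg, lapOp_apply, Ffun]
      have hs := (hsol2 xs).1
      rw [hs]
      have hE : (0:ℝ) < Real.exp (v₀ xs + v2 xs) := Real.exp_pos _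
      have hH' : 0 < H (Real.exp (v₀ xs + v2 xs)) := hHpos _ hE.le
      have hgpos : 0 < primFun G (Real.exp (u₀ xs + u2 xs)) :=
        primFun_pos hGc hGpos (Real.exp_pos _).le
          (by rw [← Real.exp_zero]; exact Real.exp_lt_exp.mpr hxs)
      have hmain := mul_pos (sub_pos.mpr hlam21) (mul_pos (mul_pos hE hH') hgpos)
      nlinarith [hmain]
    have hgap := lap_strong_pos hω_nonneg hμ hconn d gg hLd hdnn hggnn xs hggpos
    intro x
    have := hgap x
    simp only [hd, Pi.sub_apply] at this
    linarith
  have hgap_v : ∀ x, v2 x < Tv u2 v2 x := by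
    set d : V → ℝ := Tv u2 v2 - v2 with hd
    set gg : V → ℝ := fun x => Ffun H G v₀ u₀ lam1 K c₂ v2 u2 x - lapOp ω μ K v2 x with hgg
    have hLd : ∀ x, K * d x - graphLap ω μ d x = gg x := by
      intro x
      have h3 : lapOp ω μ K d x = lapOp ω μ K (Tv u2 v2) x - lapOp ω μ K v2 x := by
        rw [hd, map_sub]; rfl
      have h2 : lapOp ω μ K (Tv u2 v2) = Ffun H G v₀ u₀ lam1 K c₂ v2 u2 := hLe _
      rw [← lapOp_apply, h3, h2]
    have hggnn : ∀ x, 0 ≤ gg x := by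
      intro x
      simp only [hgg]
      linarith [hlow_v x]
    have hdnn : ∀ x, 0 ≤ d x := by
      intro x
      simp only [hd, Pi.sub_apply]
      linarith [hTa_v x]
    have hggpos : 0 < gg ys := by
      simp only [hgg, lapOp_apply, Ffun]
      have hs := (hsol2 ys).2
      rw [hs]
      have hE : (0:ℝ) < Real.exp (u₀ ys + u2 ys) := Real.exp_pos _
      have hG' : 0 < G (Real.exp (u₀ ys + u2 ys)) := hGpos _ hE.le
      have hgpos : 0 < primFun H (Real.exp (v₀ ys + v2 ys)) :=
        primFun_pos hHc hHpos (Real.exp_pos _).le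
          (by rw [← Real.exp_zero]; exact Real.exp_lt_exp.mpr hys)
      have hmain := mul_pos (sub_pos.mpr hlam21) (mul_pos (mul_pos hE hG') hgpos)
      nlinarith [hmain]
    have hgap := lap_strong_pos hω_nonneg hμ hconn d gg hLd hdnn hggnn ys hggpos
    intro x
    have := hgap x
    simp only [hd, Pi.sub_apply] at this
    linarith
  -- the fixed point is strictly above (u2, v2)
  have hstar_u : ∀ x, u2 x < ustar x := by
    intro x
    have h1 : Tu u2 v2 x ≤ Tu ustar vstar x :=
      hTu_mono u2 v2 ustar vstar (hboxu _ hstar_mem_u.2) (fun y => hv2 y)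
        (fun y => hstar_mem_u.1 y) (fun y => hstar_mem_v.1 y) x
    rw [hfixu] at h1
    exact lt_of_lt_of_le (hgap_u x) h1
  have hstar_v : ∀ x, v2 x < vstar x := by
    intro x
    have h1 : Tv u2 v2 x ≤ Tv ustar vstar x :=
      hTv_mono u2 v2 ustar vstar (hboxv _ hstar_mem_v.2) (fun y => hu2 y)
        (fun y => hstar_mem_u.1 y) (fun y => hstar_mem_v.1 y) x
    rw [hfixv] at h1
    exact lt_of_lt_of_le (hgap_v x) h1
  -- conclude via maximality
  by_cases hcase : ((ustar, vstar) : (V → ℝ) × (V → ℝ)) = (u1, v1)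
  · have h1 : ustar = u1 := congrArg Prod.fst hcase
    have h2 : vstar = v1 := congrArg Prod.snd hcase
    intro x
    constructor
    · rw [← h1]; exact hstar_u x
    · rw [← h2]; exact hstar_v x
  · intro x
    obtain ⟨ha, hb⟩ := hmax1.2 ustar vstar hsolstar hcase x
    exact ⟨lt_trans (hstar_u x) ha, lt_trans (hstar_v x) hb⟩
end

section
/- Let K > 0 and let w : V → ℝ satisfy Δw(x) ≥ K·w(x) for every x ∈ V, with strict inequality Δw(x*) > K·w(x*) at some vertex x* ∈ V. Then w(x) < 0 for every x ∈ V. -/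
open Real Finset

theorem stmt_10
    {V : Type*} [Fintype V] [DecidableEq V]
    (hV : 1 < Fintype.card V)
    (ω : V → V → ℝ) (μ : V → ℝ)
    (hω_nonneg : ∀ x y, 0 ≤ ω x y)
    (hω_symm : ∀ x y, ω x y = ω y x)
    (hω_diag : ∀ x, ω x x = 0)
    (hconn : ∀ x y : V, x ≠ y → ∃ (n : ℕ) (c : Fin (n + 1) → V),
      c 0 = x ∧ c (Fin.last n) = y ∧ ∀ i : Fin n, 0 < ω (c i.castSucc) (c i.succ))
    (hμ : ∀ x, 0 < μ x)
    (K : ℝ) (hK : 0 < K) (f : V → ℝ)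
    (hf : ∀ x, K * f x ≤ graphLap ω μ f x)
    (hstrict : ∃ xs : V, K * f xs < graphLap ω μ f xs) :
    ∀ x, f x < 0 := by
  by_contra hcon
  push_neg at hcon
  obtain ⟨z0, hz0⟩ := hcon
  -- maximum point
  have : Nonempty V := Fintype.card_pos_iff.mp (by omega)
  obtain ⟨x0, hx0⟩ := Finite.exists_max f
  have hx0nn : 0 ≤ f x0 := le_trans hz0 (hx0 z0)
  -- f x0 ≤ 0
  have hlap_le : graphLap ω μ f x0 ≤ 0 := by
    unfold graphLap
    apply mul_nonpos_of_nonneg_of_nonpos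
    · have := hμ x0; positivity
    · apply Finset.sum_nonpos
      intro y _
      exact mul_nonpos_of_nonneg_of_nonpos (hω_nonneg x0 y) (by linarith [hx0 y])
  have hfx0 : f x0 = 0 := le_antisymm (by nlinarith [hf x0]) hx0nn
  have hle0 : ∀ y, f y ≤ 0 := fun y => hfx0 ▸ hx0 y
  -- propagation
  have prop : ∀ x, f x = 0 → ∀ y, 0 < ω x y → f y = 0 := by
    intro x hx y hxy
    have hμx := hμ x
    have hsum_le : ∑ t, ω x t * (f t - f x) ≤ 0 := by
      apply Finset.sum_nonpos
      intro t _
      exact mul_nonpos_of_nonneg_of_nonpos (hω_nonneg x t) (by linarith [hle0 t])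
    have hsum_ge : 0 ≤ ∑ t, ω x t * (f t - f x) := by
      have h := hf x
      unfold graphLap at h
      rw [hx, mul_zero] at h
      have h2 := nonneg_of_mul_nonneg_right h (one_div_pos.mpr hμx)
      simpa [hx] using h2
    have hsum0 : ∑ t, ω x t * (f t - f x) = 0 := le_antisymm hsum_le hsum_ge
    have heach := (Finset.sum_eq_zero_iff_of_nonpos (fun t _ =>
      mul_nonpos_of_nonneg_of_nonpos (hω_nonneg x t) (by linarith [hle0 t]))).mp hsum0
    have := heach y (Finset.mem_univ y)
    have h2 : f y - f x = 0 := by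
      rcases mul_eq_zero.mp this with h | h
      · exact absurd h (ne_of_gt hxy)
      · exact h
    linarith [hx ▸ h2]
  -- f ≡ 0
  have hall : ∀ z, f z = 0 := by
    intro z
    by_cases hz : z = x0
    · rw [hz]; exact hfx0
    · obtain ⟨n, c, hc0, hcl, hstep⟩ := hconn x0 z (Ne.symm hz)
      have key : ∀ i : Fin (n + 1), f (c i) = 0 := by
        intro i
        induction i using Fin.induction with
        | zero => rw [hc0]; exact hfx0
        | succ j ih => exact prop (c j.castSucc) ih (c j.succ) (hstep j)
      have := key (Fin.last n)
      rwa [hcl] at this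
  -- contradiction with strict
  obtain ⟨xs, hs⟩ := hstrict
  have : graphLap ω μ f xs = 0 := by
    unfold graphLap
    rw [Finset.sum_eq_zero, mul_zero]
    intro y _
    rw [hall y, hall xs]
    ring
  rw [this, hall xs, mul_zero] at hs
  exact lt_irrefl 0 hs
end

section
/- There exists a constant C > 0 depending only on the weighted graph (V, ω, μ) and on G and H such that for every λ > 0 and every solution (u, v) of (S_λ) with u₀ + u ≤ 0 and v₀ + v ≤ 0 on V, the functions u' = u − ū and v' = v − v̄ satisfy ‖∇u'‖₂ ≤ C·λ and ‖∇v'‖₂ ≤ C·λ. -/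
open Real Finset

section Aux
variable {V : Type*} [Fintype V] (ω : V → V → ℝ) (μ : V → ℝ)

/-- The Dirichlet energy as a double sum. -/
noncomputable def dEnergy (f : V → ℝ) : ℝ := ∑ x, ∑ y, ω x y * (f y - f x) ^ 2

/-- integral of f² -/
noncomputable def sqInt (f : V → ℝ) : ℝ := ∑ x, μ x * f x ^ 2

lemma sqInt_eq (f : V → ℝ) : graphInt μ (fun x => f x ^ 2) = sqInt μ f := rfl

lemma dEnergy_nonneg (hω : ∀ x y, 0 ≤ ω x y) (f : V → ℝ) : 0 ≤ dEnergy ω f :=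
  Finset.sum_nonneg fun x _ => Finset.sum_nonneg fun y _ =>
    mul_nonneg (hω x y) (sq_nonneg _)

lemma sqInt_nonneg (hμ : ∀ x, 0 < μ x) (f : V → ℝ) : 0 ≤ sqInt μ f :=
  Finset.sum_nonneg fun x _ => mul_nonneg (hμ x).le (sq_nonneg _)

lemma dEnergy_continuous : Continuous (dEnergy ω) := by
  refine continuous_finset_sum _ fun x _ => continuous_finset_sum _ fun y _ => ?_
  exact continuous_const.mul (((continuous_apply y).sub (continuous_apply x)).pow 2)

lemma sqInt_continuous : Continuous (sqInt μ) := by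
  refine continuous_finset_sum _ fun x _ => ?_
  exact continuous_const.mul ((continuous_apply x).pow 2)

lemma graphInt_continuous : Continuous (graphInt μ) := by
  refine continuous_finset_sum _ fun x _ => continuous_const.mul (continuous_apply x)

lemma graphInt_gradSq (hμ : ∀ x, 0 < μ x) (f : V → ℝ) :
    graphInt μ (gradSq ω μ f) = (1 / 2) * dEnergy ω f := by
  unfold graphInt gradSq dEnergy
  rw [Finset.mul_sum]
  refine Finset.sum_congr rfl fun x _ => ?_
  have : μ x ≠ 0 := (hμ x).ne'
  field_simp

lemma dEnergy_smul (c : ℝ) (f : V → ℝ) : dEnergy ω (c • f) = c ^ 2 * dEnergy ω f := by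
  unfold dEnergy
  rw [Finset.mul_sum]
  refine Finset.sum_congr rfl fun x _ => ?_
  rw [Finset.mul_sum]
  refine Finset.sum_congr rfl fun y _ => ?_
  simp only [Pi.smul_apply, smul_eq_mul]
  ring

lemma eq_of_dEnergy_zero (hω : ∀ x y, 0 ≤ ω x y)
    (hconn : ∀ x y : V, x ≠ y → ∃ (n : ℕ) (c : Fin (n + 1) → V),
      c 0 = x ∧ c (Fin.last n) = y ∧ ∀ i : Fin n, 0 < ω (c i.castSucc) (c i.succ))
    {f : V → ℝ} (hE : dEnergy ω f = 0) (x y : V) : f x = f y := by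
  have hterm : ∀ a b : V, ω a b * (f b - f a) ^ 2 = 0 := by
    intro a b
    have h1 := (Finset.sum_eq_zero_iff_of_nonneg (fun a _ =>
      Finset.sum_nonneg fun b _ => mul_nonneg (hω a b) (sq_nonneg _))).mp hE a (Finset.mem_univ a)
    exact (Finset.sum_eq_zero_iff_of_nonneg (fun b _ =>
      mul_nonneg (hω a b) (sq_nonneg _))).mp h1 b (Finset.mem_univ b)
  have hedge : ∀ a b : V, 0 < ω a b → f a = f b := by
    intro a b hab
    rcases mul_eq_zero.mp (hterm a b) with h | h
    · exact absurd h hab.ne'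
    · have h2 : f b - f a = 0 := sq_eq_zero_iff.mp h
      linarith
  by_cases hxy : x = y
  · rw [hxy]
  obtain ⟨n, c, hc0, hcl, hpos⟩ := hconn x y hxy
  have key : ∀ i : Fin (n + 1), f (c i) = f x := by
    intro i
    induction i using Fin.induction with
    | zero => rw [hc0]
    | succ j ih => rw [← hedge _ _ (hpos j), ih]
  have := key (Fin.last n)
  rw [hcl] at this
  exact this.symm

lemma sqInt_smul (c : ℝ) (f : V → ℝ) : sqInt μ (c • f) = c ^ 2 * sqInt μ f := by
  unfold sqInt
  rw [Finset.mul_sum]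
  refine Finset.sum_congr rfl fun x _ => ?_
  simp only [Pi.smul_apply, smul_eq_mul]; ring

lemma graphInt_smul (c : ℝ) (f : V → ℝ) : graphInt μ (c • f) = c * graphInt μ f := by
  unfold graphInt
  rw [Finset.mul_sum]
  refine Finset.sum_congr rfl fun x _ => ?_
  simp only [Pi.smul_apply, smul_eq_mul]; ring

/-- Poincaré inequality -/
lemma poincare [Nonempty V] (hω : ∀ x y, 0 ≤ ω x y)
    (hconn : ∀ x y : V, x ≠ y → ∃ (n : ℕ) (c : Fin (n + 1) → V),
      c 0 = x ∧ c (Fin.last n) = y ∧ ∀ i : Fin n, 0 < ω (c i.castSucc) (c i.succ))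
    (hμ : ∀ x, 0 < μ x) :
    ∃ Cp : ℝ, 0 < Cp ∧ ∀ f : V → ℝ, graphInt μ f = 0 →
      sqInt μ f ≤ Cp * dEnergy ω f := by
  classical
  have hvol : 0 < ∑ x : V, μ x :=
    Finset.sum_pos (fun x _ => hμ x) ⟨Classical.arbitrary V, Finset.mem_univ _⟩
  have hzero : ∀ f : V → ℝ, dEnergy ω f = 0 → graphInt μ f = 0 → f = 0 := by
    intro f hE hAf
    have hc : ∀ y, f y = f (Classical.arbitrary V) := fun y =>
      eq_of_dEnergy_zero ω hω hconn hE y (Classical.arbitrary V)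
    have hsum : graphInt μ f = f (Classical.arbitrary V) * ∑ x, μ x := by
      unfold graphInt
      rw [Finset.mul_sum]
      refine Finset.sum_congr rfl fun x _ => ?_
      rw [hc x]; ring
    rw [hAf] at hsum
    have hf0 : f (Classical.arbitrary V) = 0 := by
      rcases mul_eq_zero.mp hsum.symm with h | h
      · exact h
      · exact absurd h hvol.ne'
    funext y; rw [hc y, hf0]; rfl
  set K : Set (V → ℝ) := {f | sqInt μ f = 1 ∧ graphInt μ f = 0} with hK
  have hscale : ∀ f : V → ℝ, graphInt μ f = 0 → sqInt μ f ≠ 0 →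
      ((Real.sqrt (sqInt μ f))⁻¹ • f) ∈ K := by
    intro f hAf hNf
    have hNpos : 0 < sqInt μ f := lt_of_le_of_ne (sqInt_nonneg μ hμ f) (Ne.symm hNf)
    have hs : Real.sqrt (sqInt μ f) ^ 2 = sqInt μ f := Real.sq_sqrt hNpos.le
    constructor
    · show sqInt μ ((Real.sqrt (sqInt μ f))⁻¹ • f) = 1
      rw [sqInt_smul, inv_pow, hs]
      exact inv_mul_cancel₀ hNf
    · show graphInt μ ((Real.sqrt (sqInt μ f))⁻¹ • f) = 0
      rw [graphInt_smul, hAf, mul_zero]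
  by_cases hne : K.Nonempty
  · have hclosed : IsClosed K := by
      have h1 : IsClosed {f : V → ℝ | sqInt μ f = 1} :=
        isClosed_singleton.preimage (sqInt_continuous μ)
      have h2 : IsClosed {f : V → ℝ | graphInt μ f = 0} :=
        isClosed_singleton.preimage (graphInt_continuous μ)
      exact h1.inter h2
    have hbdd : Bornology.IsBounded K := by
      obtain ⟨B, hB0, hB⟩ : ∃ B : ℝ, 0 ≤ B ∧ ∀ x : V, Real.sqrt (1 / μ x) ≤ B := by
        refine ⟨Finset.univ.sup' Finset.univ_nonempty (fun x => Real.sqrt (1 / μ x)), ?_, ?_⟩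
        · exact le_trans (Real.sqrt_nonneg (1 / μ (Classical.arbitrary V)))
            (Finset.le_sup' (fun x => Real.sqrt (1 / μ x)) (Finset.mem_univ (Classical.arbitrary V)))
        · exact fun x => Finset.le_sup' (fun x => Real.sqrt (1 / μ x)) (Finset.mem_univ x)
      refine (Metric.isBounded_closedBall (x := (0 : V → ℝ)) (r := B)).subset ?_
      intro f hf
      simp only [Metric.mem_closedBall, dist_zero_right]
      rw [pi_norm_le_iff_of_nonneg hB0]
      intro x
      have hterm : μ x * f x ^ 2 ≤ 1 := by
        have h := Finset.single_le_sum (f := fun x => μ x * f x ^ 2)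
          (fun x _ => mul_nonneg (hμ x).le (sq_nonneg _)) (Finset.mem_univ x)
        have h2 : (∑ x, μ x * f x ^ 2) = sqInt μ f := rfl
        rw [h2, hf.1] at h
        exact h
      have hx : f x ^ 2 ≤ 1 / μ x := by
        rw [le_div_iff₀ (hμ x)]; linarith [hterm]
      calc ‖f x‖ = Real.sqrt (f x ^ 2) := by rw [Real.sqrt_sq_eq_abs]; rfl
        _ ≤ Real.sqrt (1 / μ x) := Real.sqrt_le_sqrt hx
        _ ≤ B := hB x
    have hKcompact : IsCompact K := Metric.isCompact_of_isClosed_isBounded hclosed hbdd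
    obtain ⟨f₀, hf₀K, hmin⟩ := hKcompact.exists_isMinOn hne (dEnergy_continuous ω).continuousOn
    have hε : 0 < dEnergy ω f₀ := by
      rcases lt_or_eq_of_le (dEnergy_nonneg ω hω f₀) with h | h
      · exact h
      · exfalso
        have hf0 : f₀ = 0 := hzero f₀ h.symm hf₀K.2
        have h1 : (1 : ℝ) = 0 := by
          rw [← hf₀K.1, hf0]
          unfold sqInt
          simp
        exact one_ne_zero h1
    refine ⟨(dEnergy ω f₀)⁻¹, inv_pos.mpr hε, ?_⟩
    intro f hAf
    by_cases hNf : sqInt μ f = 0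
    · rw [hNf]
      exact mul_nonneg (inv_pos.mpr hε).le (dEnergy_nonneg ω hω f)
    · have hg := hscale f hAf hNf
      have hNpos : 0 < sqInt μ f := lt_of_le_of_ne (sqInt_nonneg μ hμ f) (Ne.symm hNf)
      have hle : dEnergy ω f₀ ≤ dEnergy ω ((Real.sqrt (sqInt μ f))⁻¹ • f) := hmin hg
      rw [dEnergy_smul, inv_pow, Real.sq_sqrt hNpos.le] at hle
      have h1 : sqInt μ f * dEnergy ω f₀ ≤ dEnergy ω f := by
        have h2 := mul_le_mul_of_nonneg_left hle hNpos.le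
        rwa [← mul_assoc, mul_inv_cancel₀ hNf, one_mul] at h2
      rw [le_inv_mul_iff₀ hε]
      linarith [h1]
  · refine ⟨1, one_pos, fun f hAf => ?_⟩
    by_cases hNf : sqInt μ f = 0
    · rw [hNf, one_mul]
      exact dEnergy_nonneg ω hω f
    · exact absurd ⟨_, hscale f hAf hNf⟩ hne

end Aux

section Aux2
variable {V : Type*} [Fintype V] (ω : V → V → ℝ) (μ : V → ℝ)

lemma graphInt_gradSq' (hμ : ∀ x, 0 < μ x) (f : V → ℝ) :
    graphInt μ (gradSq ω μ f) = (1 / 2) * dEnergy ω f := by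
  unfold graphInt gradSq dEnergy
  rw [Finset.mul_sum]
  refine Finset.sum_congr rfl fun x _ => ?_
  have : μ x ≠ 0 := (hμ x).ne'
  field_simp

lemma green (hμ : ∀ x, 0 < μ x) (hsymm : ∀ x y, ω x y = ω y x) (f : V → ℝ) :
    graphInt μ (fun x => f x * graphLap ω μ f x) = -((1 / 2) * dEnergy ω f) := by
  have swap : ∑ x, ∑ y, ω x y * f y ^ 2 = ∑ x, ∑ y, ω x y * f x ^ 2 := by
    rw [Finset.sum_comm]
    refine Finset.sum_congr rfl fun x _ => Finset.sum_congr rfl fun y _ => ?_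
    rw [hsymm]
  have lhs : graphInt μ (fun x => f x * graphLap ω μ f x)
      = ∑ x, ∑ y, ω x y * (f x * (f y - f x)) := by
    unfold graphInt graphLap
    refine Finset.sum_congr rfl fun x _ => ?_
    have hx : μ x ≠ 0 := (hμ x).ne'
    beta_reduce
    have : μ x * (f x * (1 / μ x * ∑ y, ω x y * (f y - f x)))
        = f x * ∑ y, ω x y * (f y - f x) := by field_simp
    rw [this, Finset.mul_sum]
    exact Finset.sum_congr rfl fun y _ => by ring
  have expand : ∑ x, ∑ y, ω x y * (f x * (f y - f x))
      = (1 / 2) * (∑ x, ∑ y, ω x y * f y ^ 2) - (1 / 2) * (∑ x, ∑ y, ω x y * f x ^ 2)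
        - (1 / 2) * dEnergy ω f := by
    unfold dEnergy
    rw [Finset.mul_sum, Finset.mul_sum, Finset.mul_sum, ← Finset.sum_sub_distrib,
      ← Finset.sum_sub_distrib]
    refine Finset.sum_congr rfl fun x _ => ?_
    rw [Finset.mul_sum, Finset.mul_sum, Finset.mul_sum, ← Finset.sum_sub_distrib,
      ← Finset.sum_sub_distrib]
    exact Finset.sum_congr rfl fun y _ => by ring
  rw [lhs, expand, swap]
  ring

lemma lap_sub_const (c : ℝ) (f : V → ℝ) :
    graphLap ω μ (fun x => f x - c) = graphLap ω μ f := by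
  funext x
  unfold graphLap
  congr 1
  exact Finset.sum_congr rfl fun y _ => by ring

lemma gradSq_sub_const (c : ℝ) (f : V → ℝ) :
    gradSq ω μ (fun x => f x - c) = gradSq ω μ f := by
  funext x
  unfold gradSq
  congr 1
  exact Finset.sum_congr rfl fun y _ => by ring

lemma l1_bound (hμ : ∀ x, 0 < μ x) (f : V → ℝ) :
    ∑ x, μ x * |f x| ≤ Real.sqrt (graphVol μ) * Real.sqrt (sqInt μ f) := by
  have h := Finset.sum_mul_sq_le_sq_mul_sq Finset.univ (fun x => Real.sqrt (μ x))
    (fun x => Real.sqrt (μ x) * |f x|)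
  have h1 : ∀ x : V, Real.sqrt (μ x) * (Real.sqrt (μ x) * |f x|) = μ x * |f x| := fun x => by
    rw [← mul_assoc, Real.mul_self_sqrt (hμ x).le]
  have h2 : ∀ x : V, Real.sqrt (μ x) ^ 2 = μ x := fun x => Real.sq_sqrt (hμ x).le
  have h3 : ∀ x : V, (Real.sqrt (μ x) * |f x|) ^ 2 = μ x * f x ^ 2 := fun x => by
    rw [mul_pow, h2, sq_abs]
  rw [Finset.sum_congr rfl fun x _ => h1 x, Finset.sum_congr rfl fun x _ => h2 x,
    Finset.sum_congr rfl fun x _ => h3 x] at h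
  have hnn : 0 ≤ ∑ x, μ x * |f x| :=
    Finset.sum_nonneg fun x _ => mul_nonneg (hμ x).le (abs_nonneg _)
  calc ∑ x, μ x * |f x| = Real.sqrt ((∑ x, μ x * |f x|) ^ 2) := (Real.sqrt_sq hnn).symm
    _ ≤ Real.sqrt ((∑ x, μ x) * ∑ x, μ x * f x ^ 2) := Real.sqrt_le_sqrt h
    _ = Real.sqrt (graphVol μ) * Real.sqrt (sqInt μ f) := by
        unfold graphVol sqInt
        rw [Real.sqrt_mul (Finset.sum_nonneg fun x _ => (hμ x).le)]

lemma primFun_bound {F : ℝ → ℝ} (hpos : ∀ s, 0 ≤ s → 0 < F s)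
    (hmono : StrictMonoOn F (Set.Ici 0)) (hcont : ContinuousOn F (Set.Ici 0))
    {t : ℝ} (ht0 : 0 < t) (ht1 : t ≤ 1) :
    0 ≤ primFun F t ∧ primFun F t ≤ 2 * F 1 := by
  set r := Real.sqrt t with hr
  have hr0 : 0 ≤ r := Real.sqrt_nonneg t
  have hr1 : r ≤ 1 := by
    rw [hr, show (1 : ℝ) = Real.sqrt 1 by rw [Real.sqrt_one]]
    exact Real.sqrt_le_sqrt ht1
  have hφc : ContinuousOn (fun s => 2 * s * F (s ^ 2)) (Set.uIcc r 1) := by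
    refine ContinuousOn.mul (Continuous.continuousOn (by continuity)) ?_
    refine hcont.comp ((continuous_pow 2).continuousOn) ?_
    intro s _
    exact sq_nonneg s
  have hint : IntervalIntegrable (fun s => 2 * s * F (s ^ 2)) MeasureTheory.volume r 1 :=
    hφc.intervalIntegrable
  have hfb : ∀ s ∈ Set.Icc r 1, 2 * s * F (s ^ 2) ≤ 2 * F 1 := by
    intro s hs
    have hs0 : 0 ≤ s := le_trans hr0 hs.1
    have hs1 : s ≤ 1 := hs.2
    have hsq1 : s ^ 2 ≤ 1 := by nlinarith
    have hFle : F (s ^ 2) ≤ F 1 := by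
      rcases eq_or_lt_of_le hsq1 with h | h
      · rw [h]
      · exact (hmono (sq_nonneg s) (by norm_num : (1:ℝ) ∈ Set.Ici 0) h).le
    have hFpos : 0 < F (s ^ 2) := hpos _ (sq_nonneg s)
    nlinarith
  have hfnn : ∀ s ∈ Set.Icc r 1, 0 ≤ 2 * s * F (s ^ 2) := by
    intro s hs
    have hs0 : 0 ≤ s := le_trans hr0 hs.1
    have hFpos : 0 < F (s ^ 2) := hpos _ (sq_nonneg s)
    positivity
  constructor
  · exact intervalIntegral.integral_nonneg hr1 hfnn
  · have hc : IntervalIntegrable (fun _ : ℝ => 2 * F 1) MeasureTheory.volume r 1 :=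
      intervalIntegrable_const
    have h := intervalIntegral.integral_mono_on hr1 hint hc hfb
    have hconst : (∫ _ in r..(1:ℝ), 2 * F 1) = (1 - r) * (2 * F 1) := by
      rw [intervalIntegral.integral_const, smul_eq_mul]
    rw [hconst] at h
    have hF1 : 0 < F 1 := hpos 1 (by norm_num)
    calc primFun F t ≤ (1 - r) * (2 * F 1) := h
      _ ≤ 2 * F 1 := by nlinarith

lemma main_est (hω_nonneg : ∀ x y, 0 ≤ ω x y) (hω_symm : ∀ x y, ω x y = ω y x)
    (hμ : ∀ x, 0 < μ x)
    {Cp : ℝ} (hCp : 0 < Cp)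
    (hP : ∀ f : V → ℝ, graphInt μ f = 0 → sqInt μ f ≤ Cp * dEnergy ω f)
    {M lam : ℝ} (hM : 0 ≤ M) (hlam : 0 < lam)
    (w F : V → ℝ) (c : ℝ) (hw : graphInt μ w = 0)
    (hF : ∀ x, |F x| ≤ M)
    (heq : ∀ x, graphLap ω μ w x = -(lam * F x) + c) :
    Real.sqrt (graphInt μ (gradSq ω μ w)) ≤ (M * Real.sqrt (graphVol μ) * Real.sqrt (2 * Cp)) * lam := by
  set D := graphInt μ (gradSq ω μ w) with hD
  have hDnonneg : 0 ≤ D := by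
    rw [hD]
    refine Finset.sum_nonneg fun x _ => mul_nonneg (hμ x).le ?_
    unfold gradSq
    refine mul_nonneg (div_nonneg zero_le_one (by linarith [hμ x])) ?_
    exact Finset.sum_nonneg fun y _ => mul_nonneg (hω_nonneg x y) (sq_nonneg _)
  have hdE : dEnergy ω w = 2 * D := by
    rw [hD, graphInt_gradSq' ω μ hμ]; ring
  -- D = lam * ∑ μ w F
  have hgreen := green ω μ hμ hω_symm w
  have hcompute : graphInt μ (fun x => w x * graphLap ω μ w x)
      = -lam * (∑ x, μ x * (w x * F x)) + c * graphInt μ w := by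
    unfold graphInt
    rw [Finset.mul_sum, Finset.mul_sum, ← Finset.sum_add_distrib]
    refine Finset.sum_congr rfl fun x _ => ?_
    beta_reduce
    rw [heq x]
    ring
  rw [hw, mul_zero, add_zero] at hcompute
  have hDeq : D = lam * (∑ x, μ x * (w x * F x)) := by
    have : -((1 / 2) * dEnergy ω w) = -lam * (∑ x, μ x * (w x * F x)) := by
      rw [← hgreen, hcompute]
    rw [hdE] at this
    linarith
  have hsum1 : (∑ x, μ x * (w x * F x)) ≤ M * ∑ x, μ x * |w x| := by
    rw [Finset.mul_sum]
    refine Finset.sum_le_sum fun x _ => ?_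
    have h1 : w x * F x ≤ |w x| * M := by
      calc w x * F x ≤ |w x * F x| := le_abs_self _
        _ = |w x| * |F x| := abs_mul _ _
        _ ≤ |w x| * M := mul_le_mul_of_nonneg_left (hF x) (abs_nonneg _)
    calc μ x * (w x * F x) ≤ μ x * (|w x| * M) :=
          mul_le_mul_of_nonneg_left h1 (hμ x).le
      _ = M * (μ x * |w x|) := by ring
  have hsum2 := l1_bound μ hμ w
  have hsqInt : Real.sqrt (sqInt μ w) ≤ Real.sqrt (2 * Cp) * Real.sqrt D := by
    have h1 : sqInt μ w ≤ Cp * dEnergy ω w := hP w hw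
    rw [hdE] at h1
    calc Real.sqrt (sqInt μ w) ≤ Real.sqrt (Cp * (2 * D)) := Real.sqrt_le_sqrt h1
      _ = Real.sqrt (2 * Cp) * Real.sqrt D := by
          rw [show Cp * (2 * D) = (2 * Cp) * D by ring,
            Real.sqrt_mul (by positivity) D]
  -- combine
  set A := M * Real.sqrt (graphVol μ) * Real.sqrt (2 * Cp) * lam with hA
  have hA0 : 0 ≤ A := by positivity
  have hfinal : D ≤ A * Real.sqrt D := by
    have hvol0 : 0 ≤ Real.sqrt (graphVol μ) := Real.sqrt_nonneg _
    calc D = lam * (∑ x, μ x * (w x * F x)) := hDeq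
      _ ≤ lam * (M * ∑ x, μ x * |w x|) := by
          exact mul_le_mul_of_nonneg_left hsum1 hlam.le
      _ ≤ lam * (M * (Real.sqrt (graphVol μ) * Real.sqrt (sqInt μ w))) := by
          refine mul_le_mul_of_nonneg_left ?_ hlam.le
          exact mul_le_mul_of_nonneg_left hsum2 hM
      _ ≤ lam * (M * (Real.sqrt (graphVol μ) * (Real.sqrt (2 * Cp) * Real.sqrt D))) := by
          refine mul_le_mul_of_nonneg_left ?_ hlam.le
          refine mul_le_mul_of_nonneg_left ?_ hM
          exact mul_le_mul_of_nonneg_left hsqInt hvol0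
      _ = A * Real.sqrt D := by rw [hA]; ring
  rcases eq_or_lt_of_le (Real.sqrt_nonneg D) with h | h
  · rw [← h]
    exact hA0
  · have hDsq : Real.sqrt D * Real.sqrt D = D := Real.mul_self_sqrt hDnonneg
    have h2 : Real.sqrt D * Real.sqrt D ≤ A * Real.sqrt D := by rw [hDsq]; exact hfinal
    exact le_of_mul_le_mul_right h2 h


lemma graphInt_sub_avg (hvol : graphVol μ ≠ 0) (f : V → ℝ) :
    graphInt μ (fun x => f x - graphAvg μ f) = 0 := by
  unfold graphInt
  have h : ∀ x : V, μ x * (f x - graphAvg μ f) = μ x * f x - graphAvg μ f * μ x :=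
    fun x => by ring
  rw [Finset.sum_congr rfl fun x _ => h x, Finset.sum_sub_distrib, ← Finset.mul_sum]
  have h1 : (∑ x, μ x * f x) = graphInt μ f := rfl
  have h2 : (∑ x : V, μ x) = graphVol μ := rfl
  rw [h1, h2]
  unfold graphAvg
  field_simp
  ring

end Aux2

theorem stmt_11
    {V : Type*} [Fintype V] [DecidableEq V]
    (hV : 1 < Fintype.card V)
    (ω : V → V → ℝ) (μ : V → ℝ)
    (hω_nonneg : ∀ x y, 0 ≤ ω x y)
    (hω_symm : ∀ x y, ω x y = ω y x)
    (hω_diag : ∀ x, ω x x = 0)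
    (hconn : ∀ x y : V, x ≠ y → ∃ (n : ℕ) (c : Fin (n + 1) → V),
      c 0 = x ∧ c (Fin.last n) = y ∧ ∀ i : Fin n, 0 < ω (c i.castSucc) (c i.succ))
    (hμ : ∀ x, 0 < μ x)
    (G H : ℝ → ℝ)
    (hGpos : ∀ s, 0 ≤ s → 0 < G s) (hHpos : ∀ s, 0 ≤ s → 0 < H s)
    (hGmono : StrictMonoOn G (Set.Ici 0)) (hHmono : StrictMonoOn H (Set.Ici 0))
    (hGsmooth : ContDiffOn ℝ (⊤ : ℕ∞) G (Set.Ici 0)) (hHsmooth : ContDiffOn ℝ (⊤ : ℕ∞) H (Set.Ici 0))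
    (N1 N2 : ℕ) (hN1 : 0 < N1) (hN2 : 0 < N2)
    (p1 : Fin N1 → V) (p2 : Fin N2 → V)
    (u₀ v₀ : V → ℝ)
    (hu₀ : ∀ x, graphLap ω μ u₀ x =
      -(4 * Real.pi * N1) / graphVol μ + 4 * Real.pi * ∑ j, diracDelta μ (p1 j) x)
    (hv₀ : ∀ x, graphLap ω μ v₀ x =
      -(4 * Real.pi * N2) / graphVol μ + 4 * Real.pi * ∑ j, diracDelta μ (p2 j) x)
 :
    ∃ C : ℝ, 0 < C ∧ ∀ lam : ℝ, 0 < lam → ∀ u v : V → ℝ,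
      isSolution ω μ G H N1 N2 u₀ v₀ lam u v →
      (∀ x, u₀ x + u x ≤ 0) → (∀ x, v₀ x + v x ≤ 0) →
      gradNorm ω μ (fun x => u x - graphAvg μ u) ≤ C * lam ∧
      gradNorm ω μ (fun x => v x - graphAvg μ v) ≤ C * lam := by

  classical
  have hcard : 0 < Fintype.card V := lt_trans one_pos hV
  haveI : Nonempty V := Fintype.card_pos_iff.mp hcard
  obtain ⟨Cp, hCp, hP⟩ := poincare ω μ hω_nonneg hconn hμ
  have hvol : 0 < graphVol μ :=
    Finset.sum_pos (fun x _ => hμ x) ⟨Classical.arbitrary V, Finset.mem_univ _⟩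
  have hG1 : 0 < G 1 := hGpos 1 (by norm_num)
  have hH1 : 0 < H 1 := hHpos 1 (by norm_num)
  set M : ℝ := 2 * (G 1 * H 1) with hMdef
  have hM0 : 0 < M := by positivity
  refine ⟨M * Real.sqrt (graphVol μ) * Real.sqrt (2 * Cp), by positivity, ?_⟩
  intro lam hlam u v hsol hu_le hv_le
  constructor
  · -- estimate for u
    have hw : graphInt μ (fun x => u x - graphAvg μ u) = 0 := graphInt_sub_avg μ hvol.ne' u
    have hF : ∀ x, |Real.exp (v₀ x + v x) * H (Real.exp (v₀ x + v x)) *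
        primFun G (Real.exp (u₀ x + u x))| ≤ M := by
      intro x
      have hb0 : 0 < Real.exp (v₀ x + v x) := Real.exp_pos _
      have hb1 : Real.exp (v₀ x + v x) ≤ 1 := Real.exp_le_one_iff.mpr (hv_le x)
      have ha0 : 0 < Real.exp (u₀ x + u x) := Real.exp_pos _
      have ha1 : Real.exp (u₀ x + u x) ≤ 1 := Real.exp_le_one_iff.mpr (hu_le x)
      obtain ⟨hpf0, hpf1⟩ := primFun_bound hGpos hGmono hGsmooth.continuousOn ha0 ha1
      have hHb0 : 0 < H (Real.exp (v₀ x + v x)) := hHpos _ hb0.le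
      have hHb1 : H (Real.exp (v₀ x + v x)) ≤ H 1 := by
        rcases eq_or_lt_of_le hb1 with h | h
        · rw [h]
        · exact (hHmono (Set.mem_Ici.mpr hb0.le) (by norm_num) h).le
      rw [abs_of_nonneg (by positivity), hMdef]
      nlinarith [mul_pos hb0 hHb0, mul_le_mul hb1 hHb1 hHb0.le zero_le_one]
    have heq : ∀ x, graphLap ω μ (fun y => u y - graphAvg μ u) x =
        -(lam * (Real.exp (v₀ x + v x) * H (Real.exp (v₀ x + v x)) *
          primFun G (Real.exp (u₀ x + u x)))) + 4 * Real.pi * N1 / graphVol μ := by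
      intro x
      have h1 : graphLap ω μ (fun y => u y - graphAvg μ u) x = graphLap ω μ u x :=
        congrFun (lap_sub_const ω μ (graphAvg μ u) u) x
      rw [h1, (hsol x).1]
      ring
    exact main_est ω μ hω_nonneg hω_symm hμ hCp hP hM0.le hlam
      (fun x => u x - graphAvg μ u)
      (fun x => Real.exp (v₀ x + v x) * H (Real.exp (v₀ x + v x)) *
        primFun G (Real.exp (u₀ x + u x)))
      (4 * Real.pi * N1 / graphVol μ) hw hF heq
  · -- estimate for v
    have hw : graphInt μ (fun x => v x - graphAvg μ v) = 0 := graphInt_sub_avg μ hvol.ne' v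
    have hF : ∀ x, |Real.exp (u₀ x + u x) * G (Real.exp (u₀ x + u x)) *
        primFun H (Real.exp (v₀ x + v x))| ≤ M := by
      intro x
      have hb0 : 0 < Real.exp (u₀ x + u x) := Real.exp_pos _
      have hb1 : Real.exp (u₀ x + u x) ≤ 1 := Real.exp_le_one_iff.mpr (hu_le x)
      have ha0 : 0 < Real.exp (v₀ x + v x) := Real.exp_pos _
      have ha1 : Real.exp (v₀ x + v x) ≤ 1 := Real.exp_le_one_iff.mpr (hv_le x)
      obtain ⟨hpf0, hpf1⟩ := primFun_bound hHpos hHmono hHsmooth.continuousOn ha0 ha1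
      have hGb0 : 0 < G (Real.exp (u₀ x + u x)) := hGpos _ hb0.le
      have hGb1 : G (Real.exp (u₀ x + u x)) ≤ G 1 := by
        rcases eq_or_lt_of_le hb1 with h | h
        · rw [h]
        · exact (hGmono (Set.mem_Ici.mpr hb0.le) (by norm_num) h).le
      rw [abs_of_nonneg (by positivity), hMdef]
      nlinarith [mul_pos hb0 hGb0, mul_le_mul hb1 hGb1 hGb0.le zero_le_one]
    have heq : ∀ x, graphLap ω μ (fun y => v y - graphAvg μ v) x =
        -(lam * (Real.exp (u₀ x + u x) * G (Real.exp (u₀ x + u x)) *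
          primFun H (Real.exp (v₀ x + v x)))) + 4 * Real.pi * N2 / graphVol μ := by
      intro x
      have h1 : graphLap ω μ (fun y => v y - graphAvg μ v) x = graphLap ω μ v x :=
        congrFun (lap_sub_const ω μ (graphAvg μ v) v) x
      rw [h1, (hsol x).2]
      ring
    exact main_est ω μ hω_nonneg hω_symm hμ hCp hP hM0.le hlam
      (fun x => v x - graphAvg μ v)
      (fun x => Real.exp (u₀ x + u x) * G (Real.exp (u₀ x + u x)) *
        primFun H (Real.exp (v₀ x + v x)))
      (4 * Real.pi * N2 / graphVol μ) hw hF heq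
end

section
/- For every λ > 0 and every solution (u, v) of (S_λ) with u₀ + u ≤ 0 and v₀ + v ≤ 0 on V, one has λ·∫_V e^{u₀+u} dμ ≥ 4πN2/(G(1)·H(1)) and λ·∫_V e^{v₀+v} dμ ≥ 4πN1/(G(1)·H(1)). -/
open Real Finset

lemma primFun_nonneg_le (F : ℝ → ℝ) (hF : ContinuousOn F (Set.Ici 0))
    (hpos : ∀ s, 0 ≤ s → 0 < F s) (hmono : MonotoneOn F (Set.Ici 0))
    (t : ℝ) (ht0 : 0 ≤ t) (ht1 : t ≤ 1) :
    0 ≤ primFun F t ∧ primFun F t ≤ F 1 := by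
  have ha0 : 0 ≤ Real.sqrt t := Real.sqrt_nonneg t
  have ha1 : Real.sqrt t ≤ 1 := Real.sqrt_le_one.mpr ht1
  have hcont : ContinuousOn (fun s : ℝ => 2 * s * F (s ^ 2)) (Set.uIcc (Real.sqrt t) 1) := by
    apply ContinuousOn.mul
    · exact (continuous_const.mul continuous_id).continuousOn
    · exact hF.comp (continuous_pow 2).continuousOn (fun s _ => sq_nonneg s)
  have hint : IntervalIntegrable (fun s : ℝ => 2 * s * F (s ^ 2))
      MeasureTheory.volume (Real.sqrt t) 1 := hcont.intervalIntegrable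
  have hint2 : IntervalIntegrable (fun s : ℝ => 2 * s * F 1)
      MeasureTheory.volume (Real.sqrt t) 1 := by
    apply Continuous.intervalIntegrable; continuity
  constructor
  · apply intervalIntegral.integral_nonneg ha1
    intro s hs
    have hs0 : 0 ≤ s := le_trans ha0 hs.1
    have := hpos (s ^ 2) (sq_nonneg s)
    positivity
  · have hle : primFun F t ≤ ∫ s in Real.sqrt t..(1 : ℝ), 2 * s * F 1 := by
      apply intervalIntegral.integral_mono_on ha1 hint hint2
      intro s hs
      have hs0 : 0 ≤ s := le_trans ha0 hs.1
      have hF_le : F (s ^ 2) ≤ F 1 := by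
        apply hmono (Set.mem_Ici.mpr (sq_nonneg s)) (Set.mem_Ici.mpr zero_le_one)
        nlinarith [hs.2]
      nlinarith [hpos (s ^ 2) (sq_nonneg s)]
    have hcalc : (∫ s in Real.sqrt t..(1 : ℝ), 2 * s * F 1) = F 1 * (1 - t) := by
      have heq : (fun s : ℝ => 2 * s * F 1) = fun s : ℝ => (2 * F 1) * s := by
        funext s; ring
      rw [heq, intervalIntegral.integral_const_mul, integral_id, Real.sq_sqrt ht0]
      ring
    have hF1 : 0 < F 1 := hpos 1 zero_le_one
    calc primFun F t ≤ F 1 * (1 - t) := by rw [← hcalc]; exact hle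
      _ ≤ F 1 := by nlinarith

lemma lap_sum_zero {V : Type*} [Fintype V] (ω : V → V → ℝ) (μ : V → ℝ)
    (hω_symm : ∀ x y, ω x y = ω y x) (hμ : ∀ x, 0 < μ x) (f : V → ℝ) :
    ∑ x, μ x * graphLap ω μ f x = 0 := by
  have hterm : ∀ x, μ x * graphLap ω μ f x = ∑ y, ω x y * (f y - f x) := by
    intro x
    unfold graphLap
    field_simp
    exact mul_div_cancel_left₀ _ (ne_of_gt (hμ x))
  simp_rw [hterm, mul_sub, Finset.sum_sub_distrib]
  have h : (∑ x, ∑ y, ω x y * f y) = ∑ x, ∑ y, ω x y * f x := by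
    rw [Finset.sum_comm]
    exact Finset.sum_congr rfl fun x _ => Finset.sum_congr rfl fun y _ => by rw [hω_symm]
  linarith

lemma key_bound {V : Type*} [Fintype V] [Nonempty V]
    (ω : V → V → ℝ) (μ : V → ℝ)
    (hω_symm : ∀ x y, ω x y = ω y x) (hμ : ∀ x, 0 < μ x)
    (F1 F2 : ℝ → ℝ)
    (h1pos : ∀ s, 0 ≤ s → 0 < F1 s) (h2pos : ∀ s, 0 ≤ s → 0 < F2 s)
    (h1mono : MonotoneOn F1 (Set.Ici 0)) (h2mono : MonotoneOn F2 (Set.Ici 0))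
    (h2cont : ContinuousOn F2 (Set.Ici 0))
    (lam : ℝ) (hlam : 0 < lam) (N : ℕ)
    (w a b : V → ℝ) (ha : ∀ x, a x ≤ 0) (hb : ∀ x, b x ≤ 0)
    (heq : ∀ x, graphLap ω μ w x =
      -lam * Real.exp (a x) * F1 (Real.exp (a x)) * primFun F2 (Real.exp (b x)) +
        4 * Real.pi * N / graphVol μ) :
    4 * Real.pi * N / (F1 1 * F2 1) ≤ lam * ∑ x, μ x * Real.exp (a x) := by
  have hvol : 0 < graphVol μ := Finset.sum_pos (fun x _ => hμ x) Finset.univ_nonempty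
  set S := ∑ x, μ x * (Real.exp (a x) * F1 (Real.exp (a x)) * primFun F2 (Real.exp (b x)))
    with hSdef
  have h0 := lap_sum_zero ω μ hω_symm hμ w
  have hexpand : ∀ x, μ x * graphLap ω μ w x =
      -lam * (μ x * (Real.exp (a x) * F1 (Real.exp (a x)) * primFun F2 (Real.exp (b x)))) +
        (4 * Real.pi * N / graphVol μ) * μ x := by
    intro x; rw [heq x]; ring
  have hsum : (0 : ℝ) = -lam * S + (4 * Real.pi * N / graphVol μ) * graphVol μ := by
    rw [← h0]
    simp_rw [hexpand, Finset.sum_add_distrib, ← Finset.mul_sum]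
    rfl
  rw [div_mul_cancel₀ _ (ne_of_gt hvol)] at hsum
  have hS : lam * S = 4 * Real.pi * N := by linarith
  have hF1 : 0 < F1 1 := h1pos 1 zero_le_one
  have hF2 : 0 < F2 1 := h2pos 1 zero_le_one
  have hSle : S ≤ F1 1 * F2 1 * ∑ x, μ x * Real.exp (a x) := by
    rw [Finset.mul_sum]
    apply Finset.sum_le_sum
    intro x _
    have he0 : 0 < Real.exp (a x) := Real.exp_pos _
    have he1 : Real.exp (a x) ≤ 1 := Real.exp_le_one_iff.mpr (ha x)
    have hb0 : 0 < Real.exp (b x) := Real.exp_pos _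
    have hb1 : Real.exp (b x) ≤ 1 := Real.exp_le_one_iff.mpr (hb x)
    have hF1le : F1 (Real.exp (a x)) ≤ F1 1 :=
      h1mono (Set.mem_Ici.mpr he0.le) (Set.mem_Ici.mpr zero_le_one) he1
    have hF1pos : 0 < F1 (Real.exp (a x)) := h1pos _ he0.le
    obtain ⟨hp0, hp1⟩ := primFun_nonneg_le F2 h2cont h2pos h2mono _ hb0.le hb1
    have hμx := hμ x
    calc μ x * (Real.exp (a x) * F1 (Real.exp (a x)) * primFun F2 (Real.exp (b x)))
        ≤ μ x * (Real.exp (a x) * F1 1 * F2 1) := by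
          apply mul_le_mul_of_nonneg_left _ hμx.le
          calc Real.exp (a x) * F1 (Real.exp (a x)) * primFun F2 (Real.exp (b x))
              ≤ Real.exp (a x) * F1 (Real.exp (a x)) * F2 1 :=
                mul_le_mul_of_nonneg_left hp1 (by positivity)
            _ ≤ Real.exp (a x) * F1 1 * F2 1 :=
                mul_le_mul_of_nonneg_right
                  (mul_le_mul_of_nonneg_left hF1le he0.le) hF2.le
      _ = F1 1 * F2 1 * (μ x * Real.exp (a x)) := by ring
  rw [div_le_iff₀ (by positivity)]
  nlinarith [mul_le_mul_of_nonneg_left hSle hlam.le]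

theorem stmt_12
    {V : Type*} [Fintype V] [DecidableEq V]
    (hV : 1 < Fintype.card V)
    (ω : V → V → ℝ) (μ : V → ℝ)
    (hω_nonneg : ∀ x y, 0 ≤ ω x y)
    (hω_symm : ∀ x y, ω x y = ω y x)
    (hω_diag : ∀ x, ω x x = 0)
    (hconn : ∀ x y : V, x ≠ y → ∃ (n : ℕ) (c : Fin (n + 1) → V),
      c 0 = x ∧ c (Fin.last n) = y ∧ ∀ i : Fin n, 0 < ω (c i.castSucc) (c i.succ))
    (hμ : ∀ x, 0 < μ x)
    (G H : ℝ → ℝ)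
    (hGpos : ∀ s, 0 ≤ s → 0 < G s) (hHpos : ∀ s, 0 ≤ s → 0 < H s)
    (hGmono : StrictMonoOn G (Set.Ici 0)) (hHmono : StrictMonoOn H (Set.Ici 0))
    (hGsmooth : ContDiffOn ℝ (⊤ : ℕ∞) G (Set.Ici 0)) (hHsmooth : ContDiffOn ℝ (⊤ : ℕ∞) H (Set.Ici 0))
    (N1 N2 : ℕ) (hN1 : 0 < N1) (hN2 : 0 < N2)
    (p1 : Fin N1 → V) (p2 : Fin N2 → V)
    (u₀ v₀ : V → ℝ)
    (hu₀ : ∀ x, graphLap ω μ u₀ x =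
      -(4 * Real.pi * N1) / graphVol μ + 4 * Real.pi * ∑ j, diracDelta μ (p1 j) x)
    (hv₀ : ∀ x, graphLap ω μ v₀ x =
      -(4 * Real.pi * N2) / graphVol μ + 4 * Real.pi * ∑ j, diracDelta μ (p2 j) x)
    (lam : ℝ) (hlam : 0 < lam) (u v : V → ℝ)
    (hsol : isSolution ω μ G H N1 N2 u₀ v₀ lam u v)
    (hu : ∀ x, u₀ x + u x ≤ 0) (hv : ∀ x, v₀ x + v x ≤ 0) :
    4 * Real.pi * N2 / (G 1 * H 1) ≤ lam * graphInt μ (fun x => Real.exp (u₀ x + u x)) ∧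
    4 * Real.pi * N1 / (G 1 * H 1) ≤ lam * graphInt μ (fun x => Real.exp (v₀ x + v x)) := by
  have hne : Nonempty V := Fintype.card_pos_iff.mp (by omega)
  constructor
  · exact key_bound ω μ hω_symm hμ G H hGpos hHpos hGmono.monotoneOn hHmono.monotoneOn
      hHsmooth.continuousOn lam hlam N2 v (fun x => u₀ x + u x) (fun x => v₀ x + v x)
      hu hv (fun x => (hsol x).2)
  · rw [mul_comm (G 1)]
    exact key_bound ω μ hω_symm hμ H G hHpos hGpos hHmono.monotoneOn hGmono.monotoneOn
      hGsmooth.continuousOn lam hlam N1 u (fun x => v₀ x + v x) (fun x => u₀ x + u x)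
      hv hu (fun x => (hsol x).1)
end

section
/- There exists a constant C > 0 depending only on the weighted graph (V, ω, μ) and on the fixed function u₀ : V → ℝ such that for every u : V → ℝ with u' = u − ū not identically zero, ∫_V e^{u₀+u} dμ ≤ C · e^{ū} · e^{‖∇u'‖₂²}. -/
open Real Finset

/-!
On a connected finite graph, the difference `f x - f y` is controlled along a path from `y` to `x`
by the weights of its edges and `‖∇f‖₂`, so `f x - f y ≤ K ‖∇f‖₂ ≤ K²/4 + ‖∇f‖₂²` with `K` depending
only on the graph. Applied to `f = u - ū` at a vertex `y` where `u y ≤ ū`, this gives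
`u ≤ ū + K²/4 + ‖∇(u - ū)‖₂²` pointwise, and integrating `e^{u₀ + u}` yields the claim.
-/

section GraphInt

variable {V : Type*} [Fintype V] (μ : V → ℝ)

lemma graphInt_mono (hμ : ∀ x, 0 ≤ μ x) {f g : V → ℝ} (hfg : ∀ x, f x ≤ g x) :
    graphInt μ f ≤ graphInt μ g :=
  Finset.sum_le_sum fun x _ => mul_le_mul_of_nonneg_left (hfg x) (hμ x)

lemma graphInt_mul_const (f : V → ℝ) (c : ℝ) :
    graphInt μ (fun x => f x * c) = graphInt μ f * c := by
  simp only [graphInt, Finset.sum_mul, mul_assoc]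

lemma graphInt_nonneg (hμ : ∀ x, 0 ≤ μ x) {f : V → ℝ} (hf : ∀ x, 0 ≤ f x) :
    0 ≤ graphInt μ f :=
  Finset.sum_nonneg fun x _ => mul_nonneg (hμ x) (hf x)

lemma graphInt_pos [Nonempty V] (hμ : ∀ x, 0 < μ x) {f : V → ℝ} (hf : ∀ x, 0 < f x) :
    0 < graphInt μ f :=
  Finset.sum_pos (fun x _ => mul_pos (hμ x) (hf x)) Finset.univ_nonempty

lemma mul_le_graphInt (hμ : ∀ x, 0 ≤ μ x) {f : V → ℝ} (hf : ∀ x, 0 ≤ f x) (a : V) :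
    μ a * f a ≤ graphInt μ f :=
  Finset.single_le_sum (f := fun x => μ x * f x) (fun x _ => mul_nonneg (hμ x) (hf x))
    (Finset.mem_univ a)

lemma exists_le_graphAvg [Nonempty V] (hμ : ∀ x, 0 < μ x) (f : V → ℝ) :
    ∃ y, f y ≤ graphAvg μ f := by
  by_contra! hf
  have hvol : graphVol μ = graphInt μ (fun _ => 1) := by simp [graphVol, graphInt]
  have hlt : graphInt μ (fun _ => graphAvg μ f) < graphInt μ f :=
    Finset.sum_lt_sum_of_nonempty Finset.univ_nonempty
      fun x _ => mul_lt_mul_of_pos_left (hf x) (hμ x)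
  have hvol_pos : 0 < graphVol μ := hvol ▸ graphInt_pos μ hμ fun _ => one_pos
  have hint : graphInt μ (fun _ => graphAvg μ f) = graphInt μ f := by
    rw [← one_mul (graphAvg μ f), graphInt_mul_const, ← hvol, graphAvg]
    field_simp
  exact hlt.ne hint

end GraphInt

section Energy

variable {V : Type*} [Fintype V] (ω : V → V → ℝ) (μ : V → ℝ)
  (hω : ∀ x y, 0 ≤ ω x y) (hμ : ∀ x, 0 < μ x)
include hω hμ

lemma gradSq_nonneg (f : V → ℝ) (x : V) : 0 ≤ gradSq ω μ f x :=
  mul_nonneg (by have := hμ x; positivity)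
    (Finset.sum_nonneg fun y _ => mul_nonneg (hω x y) (sq_nonneg _))

lemma abs_sub_le_of_weight_pos (f : V → ℝ) {a b : V} (hab : 0 < ω a b) :
    |f b - f a| ≤ √(2 / ω a b) * √(graphInt μ (gradSq ω μ f)) := by
  have hedge : ω a b * (f b - f a) ^ 2 ≤ 2 * (μ a * gradSq ω μ f a) := by
    have hμa := hμ a
    rw [gradSq, ← mul_assoc, ← mul_assoc, mul_one_div, mul_div_mul_right _ _ hμa.ne',
      div_self two_ne_zero, one_mul]
    exact Finset.single_le_sum (f := fun y => ω a y * (f y - f a) ^ 2)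
      (fun y _ => mul_nonneg (hω a y) (sq_nonneg _)) (Finset.mem_univ b)
  have hsq : (f b - f a) ^ 2 ≤ 2 / ω a b * graphInt μ (gradSq ω μ f) := by
    rw [div_mul_eq_mul_div, le_div_iff₀ hab]
    nlinarith [mul_le_graphInt μ (fun x => (hμ x).le) (gradSq_nonneg ω μ hω hμ f) a]
  rw [← Real.sqrt_mul (by positivity), ← Real.sqrt_sq_eq_abs]
  exact Real.sqrt_le_sqrt hsq

lemma exists_abs_sub_le_of_chain (n : ℕ) (c : Fin (n + 1) → V)
    (hc : ∀ i : Fin n, 0 < ω (c i.castSucc) (c i.succ)) :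
    ∃ K : ℝ, ∀ f : V → ℝ,
      |f (c (Fin.last n)) - f (c 0)| ≤ K * √(graphInt μ (gradSq ω μ f)) := by
  induction n with
  | zero => exact ⟨0, fun f => by simp⟩
  | succ n ih =>
    obtain ⟨K, hK⟩ := ih (c ∘ Fin.castSucc) fun i => by
      simpa only [Function.comp, Fin.succ_castSucc] using hc i.castSucc
    have hlast := hc (Fin.last n)
    rw [Fin.succ_last] at hlast
    refine ⟨K + √(2 / ω (c (Fin.last n).castSucc) (c (Fin.last (n + 1)))), fun f => ?_⟩
    have hstep := abs_sub_le_of_weight_pos ω μ hω hμ f hlast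
    have hinit := hK f
    simp only [Function.comp, Fin.castSucc_zero] at hinit
    calc |f (c (Fin.last (n + 1))) - f (c 0)|
        ≤ |f (c (Fin.last (n + 1))) - f (c (Fin.last n).castSucc)| +
            |f (c (Fin.last n).castSucc) - f (c 0)| := abs_sub_le _ _ _
      _ ≤ _ := by rw [add_mul]; linarith

lemma exists_sub_le_add_energy
    (hconn : ∀ x y : V, x ≠ y → ∃ (n : ℕ) (c : Fin (n + 1) → V),
      c 0 = x ∧ c (Fin.last n) = y ∧ ∀ i : Fin n, 0 < ω (c i.castSucc) (c i.succ)) :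
    ∃ A : ℝ, ∀ (f : V → ℝ) (x y : V), f x - f y ≤ A + graphInt μ (gradSq ω μ f) := by
  have hpair : ∀ x y : V, ∃ K : ℝ, ∀ f : V → ℝ,
      |f x - f y| ≤ K * √(graphInt μ (gradSq ω μ f)) := by
    intro x y
    rcases eq_or_ne y x with rfl | hyx
    · exact ⟨0, fun f => by simp⟩
    obtain ⟨n, c, rfl, rfl, hc⟩ := hconn y x hyx
    exact exists_abs_sub_le_of_chain ω μ hω hμ n c hc
  choose K hK using hpair
  obtain ⟨M, hM⟩ := (Set.finite_range (Function.uncurry K)).bddAbove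
  refine ⟨M ^ 2 / 4, fun f x y => ?_⟩
  have hE := graphInt_nonneg μ (fun x => (hμ x).le) (gradSq_nonneg ω μ hω hμ f)
  have hKM : K x y ≤ M := hM ⟨(x, y), rfl⟩
  have hosc : f x - f y ≤ M * √(graphInt μ (gradSq ω μ f)) :=
    (le_abs_self _).trans <| (hK x y f).trans <|
      mul_le_mul_of_nonneg_right hKM (Real.sqrt_nonneg _)
  nlinarith [sq_nonneg (√(graphInt μ (gradSq ω μ f)) - M / 2), Real.sq_sqrt hE]

end Energy

theorem stmt_13_general
    {V : Type*} [Fintype V]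
    (hV : 1 < Fintype.card V)
    (ω : V → V → ℝ) (μ : V → ℝ)
    (hω_nonneg : ∀ x y, 0 ≤ ω x y)
    (hconn : ∀ x y : V, x ≠ y → ∃ (n : ℕ) (c : Fin (n + 1) → V),
      c 0 = x ∧ c (Fin.last n) = y ∧ ∀ i : Fin n, 0 < ω (c i.castSucc) (c i.succ))
    (hμ : ∀ x, 0 < μ x)
    (u₀ : V → ℝ) :
    ∃ C : ℝ, 0 < C ∧ ∀ u : V → ℝ, (∃ x, u x ≠ graphAvg μ u) →
      graphInt μ (fun x => Real.exp (u₀ x + u x)) ≤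
        C * Real.exp (graphAvg μ u) *
          Real.exp (graphInt μ (gradSq ω μ (fun x => u x - graphAvg μ u))) := by
  have : Nonempty V := Fintype.card_pos_iff.mp (by omega)
  obtain ⟨A, hA⟩ := exists_sub_le_add_energy ω μ hω_nonneg hμ hconn
  have hC := graphInt_pos μ hμ fun x => Real.exp_pos (u₀ x)
  refine ⟨Real.exp A * graphInt μ (fun x => Real.exp (u₀ x)), by positivity, fun u _ => ?_⟩
  set E := graphInt μ (gradSq ω μ (fun x => u x - graphAvg μ u))
  obtain ⟨y, hy⟩ := exists_le_graphAvg μ hμ u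
  have hpt : ∀ x, u₀ x + u x ≤ u₀ x + (A + graphAvg μ u + E) := fun x => by
    linarith [hA (fun x => u x - graphAvg μ u) x y]
  calc graphInt μ (fun x => Real.exp (u₀ x + u x))
      ≤ graphInt μ (fun x => Real.exp (u₀ x) * Real.exp (A + graphAvg μ u + E)) :=
        graphInt_mono μ (fun x => (hμ x).le) fun x => by
          rw [← Real.exp_add]; exact Real.exp_le_exp.mpr (hpt x)
    _ = _ := by rw [graphInt_mul_const, Real.exp_add, Real.exp_add]; ring

theorem stmt_13
    {V : Type*} [Fintype V] [DecidableEq V]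
    (hV : 1 < Fintype.card V)
    (ω : V → V → ℝ) (μ : V → ℝ)
    (hω_nonneg : ∀ x y, 0 ≤ ω x y)
    (hω_symm : ∀ x y, ω x y = ω y x)
    (hω_diag : ∀ x, ω x x = 0)
    (hconn : ∀ x y : V, x ≠ y → ∃ (n : ℕ) (c : Fin (n + 1) → V),
      c 0 = x ∧ c (Fin.last n) = y ∧ ∀ i : Fin n, 0 < ω (c i.castSucc) (c i.succ))
    (hμ : ∀ x, 0 < μ x)
    (u₀ : V → ℝ) :
    ∃ C : ℝ, 0 < C ∧ ∀ u : V → ℝ, (∃ x, u x ≠ graphAvg μ u) →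
      graphInt μ (fun x => Real.exp (u₀ x + u x)) ≤
        C * Real.exp (graphAvg μ u) *
          Real.exp (graphInt μ (gradSq ω μ (fun x => u x - graphAvg μ u))) :=
  stmt_13_general hV ω μ hω_nonneg hconn hμ u₀
end
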